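/- arXiv:2603.09459 — 2 statements merged into one kernel-verified Lean document; each statement's English description precedes it below -/
import Mathlib

section
/- Let (M, Σ_M, μ_M) be a measure space, h : M → N strongly measurable, and p ∈ [1,∞]. Suppose (N, d_N) is a complete separable length space in the quantitative sense that for every y, y' ∈ N and every κ > 1 there exists a Lipschitz curve γ : [0,1] → N with γ(0) = y, γ(1) = y', and Lipschitz constant Lip(γ) ≤ κ · d_N(y,y'). Then for every F, F' ∈ L^p_h(M,N) and every κ > 1 there exists a curve c : [0,1] → L^p_h(M,N) with c(0) = F, c(1) = F', and D_p(c(s), c(t)) ≤ κ |s−t| · D_p(F, F') for all s, t ∈ [0,1]; consequently (L^p_h(M,N), D_p) is a length space (its metric coincides with the induced intrinsic metric given by the infimum of lengths of absolutely continuous connecting curves). -/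
set_option linter.unusedSectionVars false

open MeasureTheory ENNReal Set Filter Topology TopologicalSpace

noncomputable section

namespace NLS

variable {α : Type*} [MeasurableSpace α] {N : Type*} [MetricSpace N]
  [MeasurableSpace N] [BorelSpace N]

/-- "Strongly measurable": Borel measurable with separable range. -/
def SM (f : α → N) : Prop :=
  Measurable f ∧ TopologicalSpace.IsSeparable (Set.range f)

theorem SM.aesm {f : α → N} (hf : SM f) (μ : Measure α) :
    AEStronglyMeasurable f μ :=
  (stronglyMeasurable_iff_measurable_separable.2 ⟨hf.1, hf.2⟩).aestronglyMeasurable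

/-- The `L^p` (extended) distance between two maps with values in a metric space;
for `p < ∞` it is `(∫ d(f x, g x)^p dμ)^{1/p}` and for `p = ∞` the essential supremum
of `x ↦ d(f x, g x)`. -/
def Dp (μ : Measure α) (p : ℝ≥0∞) (f g : α → N) : ℝ≥0∞ :=
  eLpNorm (fun x => dist (f x) (g x)) p μ

theorem Dp_self (μ : Measure α) (p : ℝ≥0∞) (f : α → N) : Dp μ p f f = 0 := by
  unfold Dp
  simp only [dist_self]
  exact eLpNorm_zero'

theorem Dp_comm (μ : Measure α) (p : ℝ≥0∞) (f g : α → N) : Dp μ p f g = Dp μ p g f := by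
  unfold Dp
  simp only [dist_comm]

theorem Dp_triangle {μ : Measure α} {p : ℝ≥0∞} (hp : 1 ≤ p) {f g k : α → N}
    (hf : AEStronglyMeasurable f μ) (hg : AEStronglyMeasurable g μ)
    (hk : AEStronglyMeasurable k μ) :
    Dp μ p f k ≤ Dp μ p f g + Dp μ p g k := by
  have h1 : Dp μ p f k ≤
      eLpNorm ((fun x => dist (f x) (g x)) + fun x => dist (g x) (k x)) p μ := by
    refine eLpNorm_mono fun x => ?_
    simp only [Pi.add_apply, Real.norm_eq_abs]
    rw [abs_of_nonneg dist_nonneg]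
    exact (dist_triangle (f x) (g x) (k x)).trans (le_abs_self _)
  exact h1.trans (eLpNorm_add_le (hf.dist hg) (hg.dist hk) hp)

/-- The nonlinear Lebesgue space `L^p_h(α, N)` with base map `h`, presented by
representatives: Borel measurable, separably valued maps at finite `D_p`-distance
from `h`.  Two representatives at `D_p`-distance `0` (equivalently, `μ`-a.e. equal)
represent the same element of the quotient nonlinear Lebesgue space; accordingly the
canonical structure below is a pseudometric space whose metric (separation) quotient is
the actual nonlinear Lebesgue space.  All topological and Borel-measurability notions for
the quotient correspond exactly to those of this pseudometric space. -/
def NLp (μ : Measure α) (h : α → N) (_hh : SM h) (p : ℝ≥0∞) : Type _ :=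
  {f : α → N // SM f ∧ Dp μ p f h ≠ ∞}

namespace NLp

variable {μ : Measure α} {h : α → N} {hh : SM h} {p : ℝ≥0∞}

def pem (μ : Measure α) (h : α → N) (hh : SM h) (p : ℝ≥0∞) (hp : 1 ≤ p) :
    PseudoEMetricSpace (NLp μ h hh p) where
  edist f g := Dp μ p f.1 g.1
  edist_self f := Dp_self μ p f.1
  edist_comm f g := Dp_comm μ p f.1 g.1
  edist_triangle f g k := Dp_triangle hp (f.2.1.aesm μ) (g.2.1.aesm μ) (k.2.1.aesm μ)

theorem dp_ne_top (hp : 1 ≤ p) (f g : NLp μ h hh p) : Dp μ p f.1 g.1 ≠ ∞ := by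
  have htri := Dp_triangle hp (f.2.1.aesm μ) (hh.aesm μ) (g.2.1.aesm μ)
  have h2 : Dp μ p h g.1 ≠ ∞ := by rw [Dp_comm]; exact g.2.2
  exact ne_top_of_le_ne_top (ENNReal.add_ne_top.2 ⟨f.2.2, h2⟩) htri

/-- The `D_p` pseudometric on the nonlinear Lebesgue space. -/
instance [hp : Fact (1 ≤ p)] : PseudoMetricSpace (NLp μ h hh p) :=
  @PseudoEMetricSpace.toPseudoMetricSpace _ (pem μ h hh p hp.out)
    (fun f g => dp_ne_top hp.out f g)

instance [Fact (1 ≤ p)] : MeasurableSpace (NLp μ h hh p) := borel _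
instance [Fact (1 ≤ p)] : BorelSpace (NLp μ h hh p) := ⟨rfl⟩

theorem edist_def [Fact (1 ≤ p)] (f g : NLp μ h hh p) :
    edist f g = Dp μ p f.1 g.1 := rfl

theorem dist_def [Fact (1 ≤ p)] (f g : NLp μ h hh p) :
    dist f g = (Dp μ p f.1 g.1).toReal := rfl

end NLp

/-- Absolutely continuous curves: `c ∈ AC^p([a,b], X)`. -/
def MemACp {X : Type*} [PseudoMetricSpace X] (p : ℝ≥0∞) (a b : ℝ) (c : ℝ → X) : Prop :=
  ∃ m : ℝ → ℝ, MemLp m p (volume.restrict (Set.Icc a b)) ∧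
    ∀ s t : ℝ, a ≤ s → s ≤ t → t ≤ b → dist (c s) (c t) ≤ ∫ r in s..t, m r

/-- The metric derivative of a curve at `t` (limit of difference quotients within `[a,b]`). -/
def mder {X : Type*} [PseudoMetricSpace X] (a b : ℝ) (c : ℝ → X) (t : ℝ) : ℝ :=
  limUnder (𝓝[Set.Icc a b \ {t}] t) fun s => dist (c s) (c t) / |s - t|

section AuxA
open scoped Classical


variable {N : Type*} [MetricSpace N] [MeasurableSpace N] [BorelSpace N]
  [TopologicalSpace.SeparableSpace N]

/-- predicate for midpoint selection -/
def midP (q : ℕ → N) (a : ℝ) (n : ℕ) (z : N × N) : Prop :=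
  z.1 = z.2 ∨ (dist z.1 (q n) ≤ (1 + a) / 2 * dist z.1 z.2 ∧
    dist (q n) z.2 ≤ (1 + a) / 2 * dist z.1 z.2)

theorem midP_total
    (hlen : ∀ y y' : N, ∀ κ : ℝ, 1 < κ → ∃ γ : ℝ → N, γ 0 = y ∧ γ 1 = y' ∧
      LipschitzOnWith (Real.toNNReal (κ * dist y y')) γ (Set.Icc (0:ℝ) 1))
    (q : ℕ → N) (hq : DenseRange q) {a : ℝ} (ha : 0 < a) :
    ∀ z : N × N, ∃ n, midP q a n z := by
  rintro ⟨y, y'⟩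
  rcases eq_or_ne y y' with rfl | hne
  · exact ⟨0, Or.inl rfl⟩
  obtain ⟨γ, hγ0, hγ1, hγl⟩ := hlen y y' (1 + a / 2) (by linarith)
  have hd : (0:ℝ) < dist y y' := dist_pos.2 hne
  have h0 : (0:ℝ) ∈ Set.Icc (0:ℝ) 1 := by constructor <;> norm_num
  have hhalf : (1/2:ℝ) ∈ Set.Icc (0:ℝ) 1 := by constructor <;> norm_num
  have h1 : (1:ℝ) ∈ Set.Icc (0:ℝ) 1 := by constructor <;> norm_num
  have hK : ((Real.toNNReal ((1 + a / 2) * dist y y')) : ℝ) = (1 + a / 2) * dist y y' := by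
    rw [Real.coe_toNNReal]
    positivity
  have hl : dist y (γ (1/2)) ≤ (1 + a / 2) * dist y y' * (1/2) := by
    have h := hγl.dist_le_mul 0 h0 (1/2) hhalf
    rw [hγ0, hK] at h
    have hd2 : dist (0:ℝ) (1/2) = 1/2 := by rw [Real.dist_eq]; norm_num
    rw [hd2] at h
    exact h
  have hr : dist (γ (1/2)) y' ≤ (1 + a / 2) * dist y y' * (1/2) := by
    have h := hγl.dist_le_mul (1/2) hhalf 1 h1
    rw [hγ1, hK] at h
    have hd2 : dist (1/2:ℝ) 1 = 1/2 := by rw [Real.dist_eq]; norm_num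
    rw [hd2] at h
    exact h
  obtain ⟨n, hn⟩ := hq.exists_dist_lt (γ (1/2)) (by positivity : (0:ℝ) < a / 4 * dist y y')
  have hn' : dist (γ (1/2)) (q n) ≤ a / 4 * dist y y' := hn.le
  refine ⟨n, Or.inr ⟨?_, ?_⟩⟩
  · calc dist y (q n) ≤ dist y (γ (1/2)) + dist (γ (1/2)) (q n) := dist_triangle _ _ _
      _ ≤ (1 + a / 2) * dist y y' * (1/2) + a / 4 * dist y y' := add_le_add hl hn'
      _ = (1 + a) / 2 * dist y y' := by ring
  · calc dist (q n) y' ≤ dist (q n) (γ (1/2)) + dist (γ (1/2)) y' := dist_triangle _ _ _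
      _ ≤ a / 4 * dist y y' + (1 + a / 2) * dist y y' * (1/2) := by
          rw [dist_comm (q n)]; exact add_le_add hn' hr
      _ = (1 + a) / 2 * dist y y' := by ring

/-- measurable approximate midpoint -/
def midQ (q : ℕ → N) (a : ℝ) (htot : ∀ z : N × N, ∃ n, midP q a n z) (z : N × N) : N :=
  (fun n (z : N × N) => if z.1 = z.2 then z.1 else q n)
    (Nat.find (p := fun n => midP q a n z) (htot z)) z

theorem midQ_measurable (q : ℕ → N) (a : ℝ) (htot : ∀ z : N × N, ∃ n, midP q a n z) :
    Measurable (midQ q a htot) := by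
  haveI := UniformSpace.secondCountable_of_separable N
  unfold midQ
  apply Measurable.find (f := fun n (z : N × N) => if z.1 = z.2 then z.1 else q n)
    (p := midP q a)
  · intro n
    exact Measurable.ite ((isClosed_eq continuous_fst continuous_snd).measurableSet)
      measurable_fst measurable_const
  · intro n
    have h1 : MeasurableSet {z : N × N | z.1 = z.2} :=
      (isClosed_eq continuous_fst continuous_snd).measurableSet
    have h2 : MeasurableSet {z : N × N | dist z.1 (q n) ≤ (1 + a) / 2 * dist z.1 z.2 ∧
        dist (q n) z.2 ≤ (1 + a) / 2 * dist z.1 z.2} := by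
      apply MeasurableSet.inter
      · exact (isClosed_le (continuous_fst.dist continuous_const)
          (continuous_const.mul (continuous_fst.dist continuous_snd))).measurableSet
      · exact (isClosed_le (continuous_const.dist continuous_snd)
          (continuous_const.mul (continuous_fst.dist continuous_snd))).measurableSet
    exact h1.union h2

theorem midQ_dist (q : ℕ → N) {a : ℝ} (ha : 0 < a)
    (htot : ∀ z : N × N, ∃ n, midP q a n z) (z : N × N) :
    dist z.1 (midQ q a htot z) ≤ (1 + a) / 2 * dist z.1 z.2 ∧
    dist (midQ q a htot z) z.2 ≤ (1 + a) / 2 * dist z.1 z.2 := by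
  have hfac : (0:ℝ) ≤ (1 + a) / 2 * dist z.1 z.2 :=
    mul_nonneg (by linarith) dist_nonneg
  have hspec := Nat.find_spec (p := fun n => midP q a n z) (htot z)
  unfold midQ
  beta_reduce
  by_cases hd : z.1 = z.2
  · rw [if_pos hd]
    constructor
    · rw [dist_self]; exact hfac
    · rw [hd, dist_self, mul_zero]
  · rw [if_neg hd]
    rcases hspec with h | h
    · exact absurd h hd
    · exact h



/-! ### dyadic points -/

def pts (mid : ℕ → N × N → N) : ℕ → ℕ → N × N → N
  | 0, j, z => if j = 0 then z.1 else z.2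
  | k+1, j, z => if j % 2 = 0 then pts mid k (j / 2) z else
      mid k (pts mid k (j / 2) z, pts mid k (j / 2 + 1) z)

theorem pts_zero (mid : ℕ → N × N → N) (k : ℕ) (z : N × N) : pts mid k 0 z = z.1 := by
  induction k with
  | zero => simp [pts]
  | succ k ih => simp [pts, ih]

theorem pts_top (mid : ℕ → N × N → N) (k : ℕ) (z : N × N) : pts mid k (2 ^ k) z = z.2 := by
  induction k with
  | zero => simp [pts]
  | succ k ih =>
    have h1 : 2 ^ (k + 1) % 2 = 0 := by omega
    have h2 : 2 ^ (k + 1) / 2 = 2 ^ k := by omega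
    simp [pts, h1, h2, ih]

theorem pts_measurable (mid : ℕ → N × N → N) (hmid : ∀ k, Measurable (mid k)) (k j : ℕ) :
    Measurable (pts mid k j) := by
  induction k generalizing j with
  | zero =>
    by_cases hj : j = 0 <;> simp [pts, hj] <;> [exact measurable_fst; exact measurable_snd]
  | succ k ih =>
    by_cases hj : j % 2 = 0
    · simpa [pts, hj] using ih (j / 2)
    · simp only [pts, hj, if_false]
      exact (hmid k).comp ((ih (j / 2)).prodMk (ih (j / 2 + 1)))

/-- the level-`k` Lipschitz constant -/
def kap (a : ℕ → ℝ) (k : ℕ) : ℝ := ∏ i ∈ Finset.range k, (1 + a i)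

theorem kap_succ (a : ℕ → ℝ) (k : ℕ) : kap a (k + 1) = kap a k * (1 + a k) :=
  Finset.prod_range_succ _ _

theorem one_le_kap {a : ℕ → ℝ} (ha : ∀ i, 0 < a i) (k : ℕ) : 1 ≤ kap a k := by
  induction k with
  | zero => simp [kap]
  | succ k ih =>
    rw [kap_succ]
    have h1 := ha k
    nlinarith

theorem kap_le_exp {a : ℕ → ℝ} {ε : ℝ} (ha : ∀ i, 0 < a i)
    (hsum : ∀ k, ∑ i ∈ Finset.range k, a i ≤ ε) (k : ℕ) : kap a k ≤ Real.exp ε := by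
  have h1 : kap a k ≤ ∏ i ∈ Finset.range k, Real.exp (a i) := by
    apply Finset.prod_le_prod
    · intro i _; have := ha i; linarith
    · intro i _
      have := Real.add_one_le_exp (a i); linarith
  rw [← Real.exp_sum] at h1
  exact h1.trans (Real.exp_le_exp.2 (hsum k))

section Estimates

variable {mid : ℕ → N × N → N} {a : ℕ → ℝ}

theorem pts_consec (ha : ∀ i, 0 < a i)
    (hmid : ∀ k z, dist z.1 (mid k z) ≤ (1 + a k) / 2 * dist z.1 z.2 ∧
      dist (mid k z) z.2 ≤ (1 + a k) / 2 * dist z.1 z.2) :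
    ∀ k j (z : N × N), dist (pts mid k j z) (pts mid k (j + 1) z) ≤
      kap a k * (1 / 2) ^ k * dist z.1 z.2 := by
  intro k
  induction k with
  | zero =>
    intro j z
    rcases Nat.eq_zero_or_pos j with rfl | hj
    · simp [pts, kap]
    · have h1 : j ≠ 0 := hj.ne'
      have h2 : j + 1 ≠ 0 := by omega
      simp only [pts, if_neg h1, if_neg h2, dist_self]
      have := one_le_kap ha 0
      have : (0:ℝ) ≤ kap a 0 * (1/2)^0 * dist z.1 z.2 := by
        apply mul_nonneg (mul_nonneg (by linarith) (by norm_num)) dist_nonneg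
      exact this
  | succ k ih =>
    intro j z
    have hkap : (0:ℝ) < 1 + a k := by have := ha k; linarith
    have hcons := ih (j / 2) z
    by_cases hj : j % 2 = 0
    · -- j even : pair (pts k (j/2), mid k applied to (pts k (j/2), pts k (j/2+1)))
      have e1 : (j + 1) % 2 ≠ 0 := by omega
      have e2 : (j + 1) / 2 = j / 2 := by omega
      simp only [pts, if_pos hj, if_neg e1, e2]
      refine le_trans (hmid k (pts mid k (j / 2) z, pts mid k (j / 2 + 1) z)).1 ?_
      calc (1 + a k) / 2 * dist (pts mid k (j / 2) z) (pts mid k (j / 2 + 1) z)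
          ≤ (1 + a k) / 2 * (kap a k * (1 / 2) ^ k * dist z.1 z.2) := by
            apply mul_le_mul_of_nonneg_left hcons (by linarith)
        _ = kap a (k + 1) * (1 / 2) ^ (k + 1) * dist z.1 z.2 := by
            rw [kap_succ]; ring
    · have e1 : (j + 1) % 2 = 0 := by omega
      have e2 : (j + 1) / 2 = j / 2 + 1 := by omega
      simp only [pts, if_neg hj, if_pos e1, e2]
      refine le_trans (hmid k (pts mid k (j / 2) z, pts mid k (j / 2 + 1) z)).2 ?_
      calc (1 + a k) / 2 * dist (pts mid k (j / 2) z) (pts mid k (j / 2 + 1) z)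
          ≤ (1 + a k) / 2 * (kap a k * (1 / 2) ^ k * dist z.1 z.2) := by
            apply mul_le_mul_of_nonneg_left hcons (by linarith)
        _ = kap a (k + 1) * (1 / 2) ^ (k + 1) * dist z.1 z.2 := by
            rw [kap_succ]; ring

theorem pts_chain (ha : ∀ i, 0 < a i)
    (hmid : ∀ k z, dist z.1 (mid k z) ≤ (1 + a k) / 2 * dist z.1 z.2 ∧
      dist (mid k z) z.2 ≤ (1 + a k) / 2 * dist z.1 z.2)
    (k : ℕ) (z : N × N) :
    ∀ i j : ℕ, i ≤ j → dist (pts mid k i z) (pts mid k j z) ≤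
      ((j : ℝ) - i) * (kap a k * (1 / 2) ^ k * dist z.1 z.2) := by
  intro i j hij
  induction j, hij using Nat.le_induction with
  | base => simp
  | succ j hij ih =>
    calc dist (pts mid k i z) (pts mid k (j + 1) z)
        ≤ dist (pts mid k i z) (pts mid k j z) + dist (pts mid k j z) (pts mid k (j+1) z) :=
          dist_triangle _ _ _
      _ ≤ ((j : ℝ) - i) * (kap a k * (1 / 2) ^ k * dist z.1 z.2)
            + kap a k * (1 / 2) ^ k * dist z.1 z.2 := add_le_add ih (pts_consec ha hmid k j z)
      _ = (((j + 1 : ℕ) : ℝ) - i) * (kap a k * (1 / 2) ^ k * dist z.1 z.2) := by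
          push_cast; ring

end Estimates


/-! ### the limit curve -/

theorem pts_even (mid : ℕ → N × N → N) (k m : ℕ) (z : N × N) :
    pts mid (k + 1) (2 * m) z = pts mid k m z := by
  have h1 : (2 * m) % 2 = 0 := by omega
  have h2 : (2 * m) / 2 = m := by omega
  simp [pts, h1, h2]

/-- clamp to `[0,1]` -/
def cl (t : ℝ) : ℝ := max 0 (min 1 t)

theorem cl_mem (t : ℝ) : cl t ∈ Icc (0:ℝ) 1 :=
  ⟨le_max_left _ _, max_le (by norm_num) (min_le_left _ _)⟩

theorem cl_of_mem {t : ℝ} (ht : t ∈ Icc (0:ℝ) 1) : cl t = t := by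
  rw [cl, min_eq_right ht.2, max_eq_right ht.1]

theorem cl_cl (t : ℝ) : cl (cl t) = cl t := cl_of_mem (cl_mem t)

variable [Nonempty N] [CompleteSpace N]

/-- the limit curve -/
def Gc (mid : ℕ → N × N → N) (t : ℝ) (z : N × N) : N :=
  limUnder atTop fun k => pts mid k ⌊(2:ℝ) ^ k * cl t⌋₊ z

section Curve

variable {mid : ℕ → N × N → N} {a : ℕ → ℝ} {E : ℝ}
variable (ha : ∀ i, 0 < a i)
  (hmid : ∀ k z, dist z.1 (mid k z) ≤ (1 + a k) / 2 * dist z.1 z.2 ∧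
      dist (mid k z) z.2 ≤ (1 + a k) / 2 * dist z.1 z.2)
  (hkapE : ∀ k, kap a k ≤ E)

include ha hmid hkapE

theorem pts_floor_le {u : ℝ} (hu : u ∈ Icc (0:ℝ) 1) {s t : ℝ} (hs : s ∈ Icc (0:ℝ) 1)
    (hts : s ≤ t) (ht : t ∈ Icc (0:ℝ) 1) (k : ℕ) (z : N × N) :
    dist (pts mid k ⌊(2:ℝ) ^ k * s⌋₊ z) (pts mid k ⌊(2:ℝ) ^ k * t⌋₊ z) ≤
      E * dist z.1 z.2 * (t - s) + E * dist z.1 z.2 * (1 / 2) ^ k := by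
  have h2k : (0:ℝ) < (2:ℝ) ^ k := by positivity
  have hs0 : (0:ℝ) ≤ (2:ℝ) ^ k * s := by nlinarith [hs.1]
  have hfm : ⌊(2:ℝ) ^ k * s⌋₊ ≤ ⌊(2:ℝ) ^ k * t⌋₊ :=
    Nat.floor_le_floor (by nlinarith)
  have hchain := pts_chain ha hmid k z _ _ hfm
  refine hchain.trans ?_
  have hub : ((⌊(2:ℝ) ^ k * t⌋₊ : ℝ) - ⌊(2:ℝ) ^ k * s⌋₊) ≤ (2:ℝ) ^ k * (t - s) + 1 := by
    have h1 : ((⌊(2:ℝ) ^ k * t⌋₊ : ℝ)) ≤ (2:ℝ) ^ k * t :=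
      Nat.floor_le (by nlinarith [hs.1, hts])
    have h2 : (2:ℝ) ^ k * s - 1 ≤ ((⌊(2:ℝ) ^ k * s⌋₊ : ℝ)) := by
      have := Nat.lt_floor_add_one ((2:ℝ) ^ k * s)
      linarith
    linarith
  have hd : (0:ℝ) ≤ dist z.1 z.2 := dist_nonneg
  have hkapnn : (0:ℝ) ≤ kap a k * (1 / 2) ^ k * dist z.1 z.2 := by
    have := one_le_kap ha k
    positivity
  calc ((⌊(2:ℝ) ^ k * t⌋₊ : ℝ) - ⌊(2:ℝ) ^ k * s⌋₊) * (kap a k * (1 / 2) ^ k * dist z.1 z.2)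
      ≤ ((2:ℝ) ^ k * (t - s) + 1) * (kap a k * (1 / 2) ^ k * dist z.1 z.2) :=
        mul_le_mul_of_nonneg_right hub hkapnn
    _ ≤ ((2:ℝ) ^ k * (t - s) + 1) * (E * (1 / 2) ^ k * dist z.1 z.2) := by
        apply mul_le_mul_of_nonneg_left
        · apply mul_le_mul_of_nonneg_right (mul_le_mul_of_nonneg_right (hkapE k) (by positivity)) hd
        · have h3 : (0:ℝ) ≤ (2:ℝ) ^ k * (t - s) := mul_nonneg h2k.le (by linarith)
          linarith
    _ = E * dist z.1 z.2 * (t - s) * ((2:ℝ) ^ k * (1/2) ^ k)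
          + E * dist z.1 z.2 * (1 / 2) ^ k := by ring
    _ = E * dist z.1 z.2 * (t - s) + E * dist z.1 z.2 * (1 / 2) ^ k := by
        rw [← mul_pow]; norm_num

theorem pts_cauchy (t : ℝ) (z : N × N) :
    CauchySeq fun k => pts mid k ⌊(2:ℝ) ^ k * cl t⌋₊ z := by
  set u := cl t with hu
  have hu01 := cl_mem t
  apply cauchySeq_of_le_geometric (1/2 : ℝ) (E * dist z.1 z.2 / 2) (by norm_num)
  intro k
  -- cross-level estimate
  set i := ⌊(2:ℝ) ^ k * u⌋₊
  set j := ⌊(2:ℝ) ^ (k+1) * u⌋₊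
  have h2k : (0:ℝ) < (2:ℝ) ^ k := by positivity
  have hx0 : (0:ℝ) ≤ (2:ℝ) ^ k * u := by nlinarith [hu01.1]
  have hji : 2 * i ≤ j ∧ j ≤ 2 * i + 1 := by
    constructor
    · apply Nat.le_floor
      push_cast
      have := Nat.floor_le hx0
      calc (2:ℝ) * i ≤ 2 * ((2:ℝ) ^ k * u) := by
            have : (i:ℝ) ≤ (2:ℝ) ^ k * u := Nat.floor_le hx0
            linarith
        _ = (2:ℝ) ^ (k+1) * u := by ring
    · have hlt : ((j:ℝ)) < 2 * i + 2 := by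
        calc (j:ℝ) ≤ (2:ℝ) ^ (k+1) * u :=
              Nat.floor_le (mul_nonneg (by positivity) hu01.1)
          _ = 2 * ((2:ℝ) ^ k * u) := by ring
          _ < 2 * (i + 1) := by
              have := Nat.lt_floor_add_one ((2:ℝ) ^ k * u)
              linarith
          _ = 2 * i + 2 := by ring
      have h2 : (j:ℝ) < ((2 * i + 2 : ℕ) : ℝ) := by push_cast; linarith
      have h3 : j < 2 * i + 2 := by exact_mod_cast h2
      omega
  have hcl2 : pts mid (k+1) (2*i) z = pts mid k i z := pts_even mid k i z
  have hd : (0:ℝ) ≤ dist z.1 z.2 := dist_nonneg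
  have hp : (0:ℝ) < (1/2:ℝ) ^ (k+1) := by positivity
  have hk1 := one_le_kap ha (k+1)
  have hE := hkapE (k+1)
  calc dist (pts mid k i z) (pts mid (k+1) j z)
      = dist (pts mid (k+1) (2*i) z) (pts mid (k+1) j z) := by rw [hcl2]
    _ ≤ ((j:ℝ) - (2*i : ℕ)) * (kap a (k+1) * (1/2) ^ (k+1) * dist z.1 z.2) :=
        pts_chain ha hmid (k+1) z _ _ hji.1
    _ ≤ 1 * (kap a (k+1) * (1/2) ^ (k+1) * dist z.1 z.2) := by
        apply mul_le_mul_of_nonneg_right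
        · have := hji.2
          have : ((j:ℝ)) ≤ ((2*i+1 : ℕ) : ℝ) := by exact_mod_cast this
          push_cast at this
          push_cast
          linarith
        · positivity
    _ ≤ 1 * (E * (1/2) ^ (k+1) * dist z.1 z.2) := by
        apply mul_le_mul_of_nonneg_left _ (by norm_num)
        apply mul_le_mul_of_nonneg_right _ hd
        exact mul_le_mul_of_nonneg_right hE hp.le
    _ = E * dist z.1 z.2 / 2 * (1 / 2) ^ k := by
        rw [pow_succ]
        ring

theorem Gc_tendsto (t : ℝ) (z : N × N) :
    Tendsto (fun k => pts mid k ⌊(2:ℝ) ^ k * cl t⌋₊ z) atTop (𝓝 (Gc mid t z)) :=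
  (pts_cauchy ha hmid hkapE t z).tendsto_limUnder

omit ha hmid hkapE in
theorem Gc_zero (z : N × N) : Gc mid 0 z = z.1 := by
  have hcl : cl 0 = 0 := by rw [cl_of_mem] ; exact ⟨le_refl _, by norm_num⟩
  have hconst : ∀ k : ℕ, pts mid k ⌊(2:ℝ) ^ k * cl 0⌋₊ z = z.1 := by
    intro k
    rw [hcl, mul_zero]
    simpa using pts_zero mid k z
  unfold Gc
  simp only [hconst]
  exact Tendsto.limUnder_eq tendsto_const_nhds

omit ha hmid hkapE in
theorem Gc_one (z : N × N) : Gc mid 1 z = z.2 := by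
  have hcl : cl 1 = 1 := by rw [cl_of_mem] ; exact ⟨by norm_num, le_refl _⟩
  have hconst : ∀ k : ℕ, pts mid k ⌊(2:ℝ) ^ k * cl 1⌋₊ z = z.2 := by
    intro k
    rw [hcl, mul_one]
    have : ((2:ℝ) ^ k) = ((2 ^ k : ℕ) : ℝ) := by push_cast; ring
    rw [this, Nat.floor_natCast]
    exact pts_top mid k z
  unfold Gc
  simp only [hconst]
  exact Tendsto.limUnder_eq tendsto_const_nhds

theorem Gc_lip_le {s t : ℝ} (hs : s ∈ Icc (0:ℝ) 1) (ht : t ∈ Icc (0:ℝ) 1) (hst : s ≤ t)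
    (z : N × N) :
    dist (Gc mid s z) (Gc mid t z) ≤ E * dist z.1 z.2 * (t - s) := by
  have hcls : cl s = s := cl_of_mem hs
  have hclt : cl t = t := cl_of_mem ht
  have h1 : Tendsto (fun k => dist (pts mid k ⌊(2:ℝ) ^ k * cl s⌋₊ z)
      (pts mid k ⌊(2:ℝ) ^ k * cl t⌋₊ z)) atTop (𝓝 (dist (Gc mid s z) (Gc mid t z))) :=
    (Gc_tendsto ha hmid hkapE s z).dist (Gc_tendsto ha hmid hkapE t z)
  have h2 : Tendsto (fun k : ℕ => E * dist z.1 z.2 * (t - s) + E * dist z.1 z.2 * (1/2:ℝ) ^ k)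
      atTop (𝓝 (E * dist z.1 z.2 * (t - s))) := by
    have h3 : Tendsto (fun k : ℕ => E * dist z.1 z.2 * (1/2:ℝ) ^ k) atTop (𝓝 0) := by
      have := tendsto_pow_atTop_nhds_zero_of_lt_one (by norm_num : (0:ℝ) ≤ 1/2)
        (by norm_num : (1/2:ℝ) < 1)
      simpa using this.const_mul (E * dist z.1 z.2)
    simpa using tendsto_const_nhds.add h3
  refine le_of_tendsto_of_tendsto' h1 h2 ?_
  intro k
  rw [hcls, hclt]
  exact pts_floor_le ha hmid hkapE hs hs hst ht k z

theorem Gc_measurable (hmidm : ∀ k, Measurable (mid k)) (t : ℝ) :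
    Measurable (Gc mid t) := by
  apply measurable_of_tendsto_metrizable
    (f := fun k => pts mid k ⌊(2:ℝ) ^ k * cl t⌋₊)
    (fun k => pts_measurable mid hmidm k _)
  rw [tendsto_pi_nhds]
  exact fun z => Gc_tendsto ha hmid hkapE t z

omit ha hmid hkapE in
theorem Gc_clamp (t : ℝ) (z : N × N) : Gc mid t z = Gc mid (cl t) z := by
  unfold Gc
  rw [cl_cl]

theorem Gc_dist_fst (hE : 1 ≤ E) (t : ℝ) (z : N × N) :
    dist z.1 (Gc mid t z) ≤ E * dist z.1 z.2 := by
  have h0 : Gc mid 0 z = z.1 := Gc_zero (mid := mid) z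
  rw [show dist z.1 (Gc mid t z) = dist (Gc mid 0 z) (Gc mid (cl t) z) by
    rw [h0, ← Gc_clamp]]
  have h := Gc_lip_le ha hmid hkapE (show (0:ℝ) ∈ Icc (0:ℝ) 1 by constructor <;> norm_num)
    (cl_mem t) (cl_mem t).1 z
  refine h.trans ?_
  have h1 : cl t - 0 ≤ 1 := by have := (cl_mem t).2; linarith
  have h2 : (0:ℝ) ≤ E * dist z.1 z.2 := mul_nonneg (by linarith) dist_nonneg
  nlinarith

theorem Gc_lip (hE : 1 ≤ E) (s t : ℝ) (hs : s ∈ Icc (0:ℝ) 1) (ht : t ∈ Icc (0:ℝ) 1)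
    (z : N × N) :
    dist (Gc mid s z) (Gc mid t z) ≤ E * |s - t| * dist z.1 z.2 := by
  rcases le_total s t with h | h
  · have := Gc_lip_le ha hmid hkapE hs ht h z
    rw [abs_of_nonpos (by linarith)]
    calc dist (Gc mid s z) (Gc mid t z) ≤ E * dist z.1 z.2 * (t - s) := this
      _ = E * -(s - t) * dist z.1 z.2 := by ring
  · have := Gc_lip_le ha hmid hkapE ht hs h z
    rw [dist_comm, abs_of_nonneg (by linarith)]
    calc dist (Gc mid t z) (Gc mid s z) ≤ E * dist z.1 z.2 * (s - t) := this
      _ = E * (s - t) * dist z.1 z.2 := by ring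

end Curve


end AuxA

section AuxA2

variable {N : Type*} [MetricSpace N] [MeasurableSpace N] [BorelSpace N]
  [TopologicalSpace.SeparableSpace N] [Nonempty N] [CompleteSpace N]

theorem sum_half_pow_le (k : ℕ) : ∑ i ∈ Finset.range k, ((1:ℝ)/2) ^ (i+1) ≤ 1 := by
  have h : ∀ k : ℕ, ∑ i ∈ Finset.range k, ((1:ℝ)/2) ^ (i+1) = 1 - (1/2) ^ k := by
    intro k
    induction k with
    | zero => simp
    | succ k ih => rw [Finset.sum_range_succ, ih]; ring
  rw [h]
  have : (0:ℝ) ≤ (1/2:ℝ) ^ k := by positivity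
  linarith

theorem exists_G
    (hlen : ∀ y y' : N, ∀ κ : ℝ, 1 < κ → ∃ γ : ℝ → N, γ 0 = y ∧ γ 1 = y' ∧
      LipschitzOnWith (Real.toNNReal (κ * dist y y')) γ (Set.Icc (0:ℝ) 1))
    {κ : ℝ} (hκ : 1 < κ) :
    ∃ G : ℝ → N × N → N,
      (∀ t, Measurable (G t)) ∧ (∀ z, G 0 z = z.1) ∧ (∀ z, G 1 z = z.2) ∧
      (∀ t z, dist z.1 (G t z) ≤ κ * dist z.1 z.2) ∧
      (∀ s t, s ∈ Set.Icc (0:ℝ) 1 → t ∈ Set.Icc (0:ℝ) 1 → ∀ z : N × N,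
        dist (G s z) (G t z) ≤ κ * |s - t| * dist z.1 z.2) := by
  obtain ⟨q, hq⟩ := TopologicalSpace.exists_dense_seq N
  set ε := Real.log κ with hε
  have hε0 : 0 < ε := Real.log_pos hκ
  set a : ℕ → ℝ := fun i => ε * (1/2) ^ (i+1) with haa
  have ha : ∀ i, 0 < a i := fun i => by positivity
  have hsum : ∀ k, ∑ i ∈ Finset.range k, a i ≤ ε := by
    intro k
    rw [haa, ← Finset.mul_sum]
    calc ε * ∑ i ∈ Finset.range k, ((1:ℝ)/2) ^ (i+1) ≤ ε * 1 :=
          mul_le_mul_of_nonneg_left (sum_half_pow_le k) hε0.le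
      _ = ε := mul_one ε
  have hkapE : ∀ k, kap a k ≤ κ := by
    intro k
    have := kap_le_exp ha hsum k
    rwa [hε, Real.exp_log (by linarith)] at this
  set mid : ℕ → N × N → N := fun k => midQ q (a k) (midP_total hlen q hq (ha k)) with hmiddef
  have hmid : ∀ k z, dist z.1 (mid k z) ≤ (1 + a k) / 2 * dist z.1 z.2 ∧
      dist (mid k z) z.2 ≤ (1 + a k) / 2 * dist z.1 z.2 := fun k z =>
    midQ_dist q (ha k) (midP_total hlen q hq (ha k)) z
  have hmidm : ∀ k, Measurable (mid k) := fun k =>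
    midQ_measurable q (a k) (midP_total hlen q hq (ha k))
  refine ⟨Gc mid, fun t => Gc_measurable ha hmid hkapE hmidm t,
    fun z => Gc_zero (mid := mid) z, fun z => Gc_one (mid := mid) z,
    fun t z => Gc_dist_fst ha hmid hkapE hκ.le t z,
    fun s t hs ht z => Gc_lip ha hmid hkapE hκ.le s t hs ht z⟩

end AuxA2

section PartA

variable {α : Type*} [MeasurableSpace α] {N : Type*} [MetricSpace N]
  [MeasurableSpace N] [BorelSpace N] [CompleteSpace N]
  [TopologicalSpace.SeparableSpace N]
  {μ : Measure α} {h : α → N} {hh : SM h} {p : ℝ≥0∞}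

theorem partA [Fact (1 ≤ p)]
    (hlen : ∀ y y' : N, ∀ κ : ℝ, 1 < κ → ∃ γ : ℝ → N, γ 0 = y ∧ γ 1 = y' ∧
      LipschitzOnWith (Real.toNNReal (κ * dist y y')) γ (Set.Icc (0:ℝ) 1))
    (F F' : NLp μ h hh p) {κ : ℝ} (hκ : 1 < κ) :
    ∃ c : ℝ → NLp μ h hh p, c 0 = F ∧ c 1 = F' ∧
      ∀ s ∈ Set.Icc (0:ℝ) 1, ∀ t ∈ Set.Icc (0:ℝ) 1,
        dist (c s) (c t) ≤ κ * |s - t| * dist F F' := by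
  have hp : 1 ≤ p := Fact.out
  rcases isEmpty_or_nonempty N with hN | hN
  · haveI : IsEmpty α := ⟨fun x => IsEmpty.false (F.1 x)⟩
    have hFF' : F = F' := Subtype.ext (funext fun x => (IsEmpty.false x).elim)
    refine ⟨fun _ => F, rfl, hFF', ?_⟩
    intro s _ t _
    rw [dist_self, ← hFF', dist_self]
    positivity
  obtain ⟨G, hGm, hG0, hG1, hGfst, hGlip⟩ := exists_G hlen hκ
  have hsep : ∀ f : α → N, TopologicalSpace.IsSeparable (Set.range f) := fun f =>
    (TopologicalSpace.isSeparable_univ_iff.2 ‹_›).mono (Set.subset_univ _)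
  have hFm : Measurable F.1 := F.2.1.1
  have hF'm : Measurable F'.1 := F'.2.1.1
  set cf : ℝ → α → N := fun t x => G t (F.1 x, F'.1 x) with hcf
  have hcfm : ∀ t, Measurable (cf t) := fun t => (hGm t).comp (hFm.prodMk hF'm)
  have hcfSM : ∀ t, SM (cf t) := fun t => ⟨hcfm t, hsep _⟩
  -- distance to F
  have hDpF : ∀ t, Dp μ p (cf t) F.1 ≤ (Real.toNNReal κ) • Dp μ p F.1 F'.1 := by
    intro t
    apply eLpNorm_le_nnreal_smul_eLpNorm_of_ae_le_mul
    filter_upwards with x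
    rw [← NNReal.coe_le_coe]
    push_cast
    simp only [coe_nnnorm, Real.norm_eq_abs, abs_of_nonneg dist_nonneg]
    rw [Real.coe_toNNReal _ (by linarith)]
    rw [dist_comm]
    exact hGfst t (F.1 x, F'.1 x)
  have hDpFF' : Dp μ p F.1 F'.1 ≠ ∞ := NLp.dp_ne_top hp F F'
  have hfin : ∀ t, Dp μ p (cf t) h ≠ ∞ := by
    intro t
    have htri := Dp_triangle hp ((hcfSM t).aesm μ) (F.2.1.aesm μ) (hh.aesm μ)
    refine ne_top_of_le_ne_top (ENNReal.add_ne_top.2 ⟨?_, F.2.2⟩) htri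
    refine ne_top_of_le_ne_top ?_ (hDpF t)
    exact ENNReal.mul_ne_top ENNReal.coe_ne_top hDpFF'
  set c : ℝ → NLp μ h hh p := fun t => ⟨cf t, hcfSM t, hfin t⟩ with hc
  have hc0 : c 0 = F := Subtype.ext (funext fun x => hG0 (F.1 x, F'.1 x))
  have hc1 : c 1 = F' := Subtype.ext (funext fun x => hG1 (F.1 x, F'.1 x))
  refine ⟨c, hc0, hc1, ?_⟩
  intro s hs t ht
  have hDp : Dp μ p (cf s) (cf t) ≤ (Real.toNNReal (κ * |s - t|)) • Dp μ p F.1 F'.1 := by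
    apply eLpNorm_le_nnreal_smul_eLpNorm_of_ae_le_mul
    filter_upwards with x
    rw [← NNReal.coe_le_coe]
    push_cast
    simp only [coe_nnnorm, Real.norm_eq_abs, abs_of_nonneg dist_nonneg]
    rw [Real.coe_toNNReal _ (by positivity)]
    exact hGlip s t hs ht (F.1 x, F'.1 x)
  have hRHSne : (Real.toNNReal (κ * |s - t|)) • Dp μ p F.1 F'.1 ≠ ∞ :=
    ENNReal.mul_ne_top ENNReal.coe_ne_top hDpFF'
  have := ENNReal.toReal_mono hRHSne hDp
  rw [NLp.dist_def, NLp.dist_def]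
  refine le_trans this (le_of_eq ?_)
  rw [ENNReal.smul_def, smul_eq_mul, ENNReal.toReal_mul, ENNReal.coe_toReal,
    Real.coe_toNNReal _ (by positivity)]

end PartA

section AuxB1

/-- right limit of a continuous monotone function -/
theorem rightLim_eq_of_continuous {P : ℝ → ℝ} (hP : Monotone P) (hc : Continuous P) (x : ℝ) :
    Function.rightLim P x = P x := by
  refine le_antisymm ?_ (hP.le_rightLim le_rfl)
  have ht : Filter.Tendsto P (𝓝[>] x) (𝓝 (P x)) :=
    (hc.continuousAt).continuousWithinAt
  refine ge_of_tendsto ht ?_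
  filter_upwards [self_mem_nhdsWithin] with y hy
  exact hP.rightLim_le hy

/-- Lebesgue FTC: the primitive of a nonnegative integrable function has it as
a.e. derivative. -/
theorem primitive_hasDerivAt {G : ℝ → ℝ} (hGm : Measurable G) (hG0 : ∀ x, 0 ≤ G x)
    (hGi : Integrable G) :
    ∀ᵐ t, HasDerivAt (fun u => ∫ r in (0:ℝ)..u, G r) (G t) t := by
  set P : ℝ → ℝ := fun u => ∫ r in (0:ℝ)..u, G r with hPdef
  have hii : ∀ a b : ℝ, IntervalIntegrable G volume a b := fun a b => hGi.intervalIntegrable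
  have hdiff : ∀ s t : ℝ, P t - P s = ∫ r in s..t, G r := fun s t =>
    intervalIntegral.integral_interval_sub_left (hii 0 t) (hii 0 s)
  have hPmono : Monotone P := by
    intro s t hst
    have h := hdiff s t
    have h2 : 0 ≤ ∫ r in s..t, G r :=
      intervalIntegral.integral_nonneg hst (fun u _ => hG0 u)
    linarith
  have hPcont : Continuous P := intervalIntegral.continuous_primitive hii 0
  have hmeq : hPmono.stieltjesFunction.measure =
      volume.withDensity (fun t => ENNReal.ofReal (G t)) := by
    refine MeasureTheory.Measure.ext_of_Ioc _ _ (fun s t hst => ?_)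
    rw [StieltjesFunction.measure_Ioc]
    have hsf : ∀ x, hPmono.stieltjesFunction x = P x := fun x => by
      rw [hPmono.stieltjesFunction_eq, rightLim_eq_of_continuous hPmono hPcont]
    rw [hsf, hsf, hdiff s t,
      MeasureTheory.withDensity_apply _ measurableSet_Ioc,
      intervalIntegral.integral_of_le hst.le,
      MeasureTheory.ofReal_integral_eq_lintegral_ofReal
        (hGi.integrableOn) (Filter.Eventually.of_forall (fun x => hG0 x))]
  have hrn : (fun x => (MeasureTheory.Measure.rnDeriv
      hPmono.stieltjesFunction.measure MeasureTheory.volume x).toReal)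
      =ᵐ[MeasureTheory.volume] G := by
    rw [hmeq]
    filter_upwards [MeasureTheory.Measure.rnDeriv_withDensity MeasureTheory.volume
      (hGm.ennreal_ofReal)] with x hx
    rw [hx, ENNReal.toReal_ofReal (hG0 x)]
  filter_upwards [hPmono.ae_hasDerivAt, hrn] with x hx hrnx
  rw [hrnx] at hx
  exact hx

/-- integral of the a.e. derivative of a monotone function is dominated by its increment,
plus interval integrability of the derivative. -/
theorem mono_deriv_integral_le {ψ : ℝ → ℝ} (hψ : Monotone ψ) {s t : ℝ} (hst : s ≤ t) :
    IntervalIntegrable (fun x => (MeasureTheory.Measure.rnDeriv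
        hψ.stieltjesFunction.measure MeasureTheory.volume x).toReal) MeasureTheory.volume s t ∧
    ∫ r in s..t, (MeasureTheory.Measure.rnDeriv
        hψ.stieltjesFunction.measure MeasureTheory.volume r).toReal ≤ ψ t - ψ s := by
  set τ := hψ.stieltjesFunction.measure with hτ
  set D : ℝ → ℝ := fun x => (MeasureTheory.Measure.rnDeriv τ MeasureTheory.volume x).toReal
    with hD
  have hDm : Measurable D := (MeasureTheory.Measure.measurable_rnDeriv _ _).ennreal_toReal
  -- integrability on Ioc s t
  have hlint : ∫⁻ x in Set.Ioc s t, MeasureTheory.Measure.rnDeriv τ MeasureTheory.volume x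
      ≤ τ (Set.Ioc s t) := MeasureTheory.Measure.setLIntegral_rnDeriv_le _
  have hτIoc : τ (Set.Ioc s t) ≠ ⊤ := by
    rw [hτ, StieltjesFunction.measure_Ioc]; exact ENNReal.ofReal_ne_top
  have hint : MeasureTheory.IntegrableOn D (Set.Ioc s t) MeasureTheory.volume :=
    MeasureTheory.integrable_toReal_of_lintegral_ne_top
      (MeasureTheory.Measure.measurable_rnDeriv _ _).aemeasurable
      (ne_top_of_le_ne_top hτIoc hlint)
  refine ⟨(intervalIntegrable_iff_integrableOn_Ioc_of_le hst).2 hint, ?_⟩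
  rcases eq_or_lt_of_le hst with rfl | hlt
  · simp
  set g := hψ.stieltjesFunction with hg
  have hgs : ψ s ≤ g s := hψ.le_rightLim le_rfl
  have hgt : Function.leftLim g t ≤ ψ t := by
    have htd : Filter.Tendsto g (𝓝[<] t) (𝓝 (Function.leftLim g t)) :=
      g.mono.tendsto_leftLim t
    refine le_of_tendsto htd ?_
    filter_upwards [self_mem_nhdsWithin] with u hu
    exact hψ.rightLim_le hu
  have heq : ∫ r in s..t, D r = (∫⁻ x in Set.Ioo s t,
      MeasureTheory.Measure.rnDeriv τ MeasureTheory.volume x).toReal := by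
    rw [intervalIntegral.integral_of_le hst, MeasureTheory.integral_Ioc_eq_integral_Ioo,
      MeasureTheory.integral_toReal ((MeasureTheory.Measure.measurable_rnDeriv _ _).aemeasurable)]
    filter_upwards [MeasureTheory.ae_restrict_of_ae
      (MeasureTheory.Measure.rnDeriv_lt_top τ MeasureTheory.volume)] with x hx
    exact hx
  have hlint2 : ∫⁻ x in Set.Ioo s t, MeasureTheory.Measure.rnDeriv τ MeasureTheory.volume x
      ≤ τ (Set.Ioo s t) := MeasureTheory.Measure.setLIntegral_rnDeriv_le _
  have hτIoo : τ (Set.Ioo s t) = ENNReal.ofReal (Function.leftLim g t - g s) := by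
    rw [hτ, StieltjesFunction.measure_Ioo]
  rw [heq]
  calc (∫⁻ x in Set.Ioo s t, MeasureTheory.Measure.rnDeriv τ MeasureTheory.volume x).toReal
      ≤ (τ (Set.Ioo s t)).toReal := ENNReal.toReal_mono
        (by rw [hτIoo]; exact ENNReal.ofReal_ne_top) hlint2
    _ = (ENNReal.ofReal (Function.leftLim g t - g s)).toReal := by rw [hτIoo]
    _ ≤ ψ t - ψ s := by
        rcases le_or_gt (Function.leftLim g t - g s) 0 with h | h
        · rw [ENNReal.ofReal_eq_zero.2 h]
          simp only [ENNReal.toReal_zero]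
          have := hψ hst
          linarith
        · rw [ENNReal.toReal_ofReal h.le]
          linarith

end AuxB1

section AuxB2

theorem cl_mono : Monotone cl := fun s t hst =>
  max_le_max le_rfl (min_le_min le_rfl hst)

theorem real_le_of_forall_pos_le_add {a b : ℝ} (h : ∀ ε : ℝ, 0 < ε → a ≤ b + ε) : a ≤ b := by
  by_contra hcon
  push_neg at hcon
  have := h ((a - b)/2) (by linarith)
  linarith

variable {X : Type*} [PseudoMetricSpace X]

set_option maxHeartbeats 2000000 in
theorem core (c : ℝ → X) (m : ℝ → ℝ)
    (hm : MemLp m 1 (volume.restrict (Set.Icc (0:ℝ) 1)))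
    (hdist : ∀ s t : ℝ, 0 ≤ s → s ≤ t → t ≤ 1 → dist (c s) (c t) ≤ ∫ r in s..t, m r) :
    ∃ g : ℝ → ℝ, Measurable g ∧ (∀ t, 0 ≤ g t) ∧
      (∀ᵐ t ∂(volume.restrict (Set.Icc (0:ℝ) 1)), g t ≤ |m t|) ∧
      MeasureTheory.IntegrableOn g (Set.Icc (0:ℝ) 1) ∧
      dist (c 0) (c 1) ≤ ∫ t in Set.Icc (0:ℝ) 1, g t ∧
      (∀ᵐ t ∂(volume.restrict (Set.Icc (0:ℝ) 1)),
        Filter.Tendsto (fun s => dist (c s) (c t) / |s - t|) (𝓝[Set.Icc (0:ℝ) 1 \ {t}] t)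
          (𝓝 (g t))) := by
  classical
  have h01 : (0:ℝ) ≤ 1 := by norm_num
  -- measurable nonnegative majorant supported in `Icc 0 1`
  set m₀ : ℝ → ℝ := hm.aestronglyMeasurable.mk m with hm₀
  have hm₀m : StronglyMeasurable m₀ := hm.aestronglyMeasurable.stronglyMeasurable_mk
  have hmae : m =ᵐ[volume.restrict (Icc (0:ℝ) 1)] m₀ := hm.aestronglyMeasurable.ae_eq_mk
  set mh : ℝ → ℝ := (Set.Icc (0:ℝ) 1).indicator (fun x => |m₀ x|) with hmh
  have hmhm : Measurable mh := (hm₀m.measurable.abs).indicator measurableSet_Icc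
  have hmh0 : ∀ x, 0 ≤ mh x := fun x => Set.indicator_nonneg (fun y _ => abs_nonneg _) x
  have hmi : IntegrableOn m (Icc (0:ℝ) 1) volume := hm.integrable le_rfl
  have hm₀i : IntegrableOn m₀ (Icc (0:ℝ) 1) volume := hmi.congr hmae
  have hmhi : Integrable mh volume := by
    rw [hmh, integrable_indicator_iff measurableSet_Icc]
    exact hm₀i.abs
  -- clamped curve and primitive
  set ch : ℝ → X := fun u => c (cl u) with hch
  set P : ℝ → ℝ := fun u => ∫ r in (0:ℝ)..u, mh r with hPdef
  have hii : ∀ a b : ℝ, IntervalIntegrable mh volume a b := fun a b => hmhi.intervalIntegrable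
  have hPdiff : ∀ s t : ℝ, P t - P s = ∫ r in s..t, mh r := fun s t =>
    intervalIntegral.integral_interval_sub_left (hii 0 t) (hii 0 s)
  have hPmono : Monotone P := by
    intro s t hst
    have h := hPdiff s t
    have h2 : 0 ≤ ∫ r in s..t, mh r :=
      intervalIntegral.integral_nonneg hst (fun u _ => hmh0 u)
    linarith
  have hPcont : Continuous P := intervalIntegral.continuous_primitive hii 0
  have hPcl : ∀ u, P (cl u) = P u := by
    intro u
    rcases le_total u 0 with h | h
    · have hclu : cl u = 0 := by
        rw [cl, min_eq_right (h.trans h01), max_eq_left h]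
      rw [hclu]
      have h2 : P 0 - P u = ∫ r in u..0, mh r := hPdiff u 0
      have h3 : ∫ r in u..0, mh r = 0 := by
        rw [intervalIntegral.integral_of_le h, MeasureTheory.integral_Ioc_eq_integral_Ioo]
        rw [MeasureTheory.setIntegral_congr_fun measurableSet_Ioo
          (g := fun _ => (0:ℝ)) (fun x hx => by
            rw [hmh, Set.indicator_of_notMem]
            intro hmem
            exact absurd hmem.1 (not_le.2 hx.2))]
        simp
      have h4 : P 0 = 0 := by rw [hPdef]; simp
      linarith
    rcases le_total 1 u with h1u | h1u
    · have hclu : cl u = 1 := by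
        rw [cl, min_eq_left h1u, max_eq_right h01]
      rw [hclu]
      have h2 : P u - P 1 = ∫ r in (1:ℝ)..u, mh r := hPdiff 1 u
      have h3 : ∫ r in (1:ℝ)..u, mh r = 0 := by
        rw [intervalIntegral.integral_of_le h1u]
        rw [MeasureTheory.setIntegral_congr_fun measurableSet_Ioc
          (g := fun _ => (0:ℝ)) (fun x hx => by
            rw [hmh, Set.indicator_of_notMem]
            intro hmem
            exact absurd hmem.2 (not_le.2 hx.1))]
        simp
      linarith
    · rw [cl_of_mem ⟨h, h1u⟩]
  -- the basic upper estimate for the clamped curve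
  have hkey : ∀ s t : ℝ, s ≤ t → dist (ch s) (ch t) ≤ P t - P s := by
    intro s t hst
    have hclst : cl s ≤ cl t := cl_mono hst
    have h1 := hdist (cl s) (cl t) (cl_mem s).1 hclst (cl_mem t).2
    have hsub : Set.Ioc (cl s) (cl t) ⊆ Set.Icc (0:ℝ) 1 := fun x hx =>
      ⟨le_of_lt (lt_of_le_of_lt (cl_mem s).1 hx.1), hx.2.trans (cl_mem t).2⟩
    have him : IntervalIntegrable m volume (cl s) (cl t) :=
      (intervalIntegrable_iff_integrableOn_Ioc_of_le hclst).2 (hmi.mono_set hsub)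
    have hsub2 : Set.Icc (cl s) (cl t) ⊆ Set.Icc (0:ℝ) 1 := fun x hx =>
      ⟨(cl_mem s).1.trans hx.1, hx.2.trans (cl_mem t).2⟩
    have h2 : ∫ r in cl s..cl t, m r ≤ ∫ r in cl s..cl t, mh r := by
      apply intervalIntegral.integral_mono_ae_restrict hclst him (hii _ _)
      have hres : volume.restrict (Icc (cl s) (cl t)) ≤ volume.restrict (Icc (0:ℝ) 1) :=
        Measure.restrict_mono hsub2 le_rfl
      have h3 : m =ᵐ[volume.restrict (Icc (cl s) (cl t))] m₀ :=
        hmae.filter_mono (ae_mono hres)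
      filter_upwards [h3, ae_restrict_mem measurableSet_Icc] with x hx hmem
      rw [hx, hmh, Set.indicator_of_mem (hsub2 hmem)]
      exact le_abs_self _
    calc dist (ch s) (ch t) ≤ ∫ r in cl s..cl t, m r := h1
      _ ≤ ∫ r in cl s..cl t, mh r := h2
      _ = P (cl t) - P (cl s) := (hPdiff _ _).symm
      _ = P t - P s := by rw [hPcl t, hPcl s]
  -- rational points and the distance functions
  set e : ℕ → ℝ := fun n => ((Denumerable.ofNat ℚ n : ℚ) : ℝ) with he
  set φ : ℕ → ℝ → ℝ := fun n u => dist (ch u) (ch (e n)) with hφ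
  have hφabs : ∀ (n : ℕ) (s t : ℝ), |φ n t - φ n s| ≤ dist (ch s) (ch t) := by
    intro n s t
    rw [hφ]
    have := abs_dist_sub_le (ch t) (ch s) (ch (e n))
    rwa [dist_comm (ch t) (ch s)] at this
  have hψmono : ∀ n, Monotone (fun u => P u - φ n u) := by
    intro n s t hst
    have h1 := hkey s t hst
    have h2 := hφabs n s t
    have h3 := abs_le.1 h2
    simp only []
    linarith [h3.2]
  have hχmono : ∀ n, Monotone (fun u => P u + φ n u) := by
    intro n s t hst
    have h1 := hkey s t hst
    have h2 := hφabs n s t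
    have h3 := abs_le.1 h2
    simp only []
    linarith [h3.1]
  set Dψ : ℕ → ℝ → ℝ := fun n x =>
    (Measure.rnDeriv (hψmono n).stieltjesFunction.measure volume x).toReal with hDψ
  set Dχ : ℕ → ℝ → ℝ := fun n x =>
    (Measure.rnDeriv (hχmono n).stieltjesFunction.measure volume x).toReal with hDχ
  have hDψ0 : ∀ n x, 0 ≤ Dψ n x := fun n x => ENNReal.toReal_nonneg
  have hDχ0 : ∀ n x, 0 ≤ Dχ n x := fun n x => ENNReal.toReal_nonneg
  have hPd : ∀ᵐ x, HasDerivAt P (mh x) x := primitive_hasDerivAt hmhm hmh0 hmhi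
  have hψd : ∀ n, ∀ᵐ x, HasDerivAt (fun u => P u - φ n u) (Dψ n x) x := fun n =>
    (hψmono n).ae_hasDerivAt
  have hχd : ∀ n, ∀ᵐ x, HasDerivAt (fun u => P u + φ n u) (Dχ n x) x := fun n =>
    (hχmono n).ae_hasDerivAt
  -- the good points
  have hgood : ∀ᵐ x, ∀ n, HasDerivAt (φ n) (mh x - Dψ n x) x ∧
      HasDerivAt (φ n) (Dχ n x - mh x) x := by
    filter_upwards [hPd, ae_all_iff.2 hψd, ae_all_iff.2 hχd] with x hx h1 h2
    intro n
    constructor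
    · have h3 := hx.sub (h1 n)
      have h4 : (fun u => P u - (P u - φ n u)) = φ n := by funext u; ring
      rw [← h4]; exact h3
    · have h3 := (h2 n).sub hx
      have h4 : (fun u => (P u + φ n u) - P u) = φ n := by funext u; ring
      rw [← h4]; exact h3
  set gE : ℝ → ℝ≥0∞ := fun x => ⨆ n, (‖deriv (φ n) x‖₊ : ℝ≥0∞) with hgE
  have hgEm : Measurable gE :=
    Measurable.iSup (fun n => (measurable_deriv (φ n)).nnnorm.coe_nnreal_ennreal)
  set g : ℝ → ℝ := fun x => (gE x).toReal with hg
  have hgm : Measurable g := hgEm.ennreal_toReal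
  have hg0 : ∀ x, 0 ≤ g x := fun x => ENNReal.toReal_nonneg
  have hgoodg : ∀ᵐ x, g x ≤ mh x ∧ (∀ n, |deriv (φ n) x| ≤ g x) ∧
      (∀ n, deriv (φ n) x = mh x - Dψ n x) ∧ (∀ n, mh x - Dχ n x = - deriv (φ n) x) := by
    filter_upwards [hgood] with x hx
    have hde : ∀ n, deriv (φ n) x = mh x - Dψ n x := fun n => (hx n).1.deriv
    have huniq : ∀ n, mh x - Dψ n x = Dχ n x - mh x := fun n => (hx n).1.unique (hx n).2
    have habs : ∀ n, |deriv (φ n) x| ≤ mh x := by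
      intro n
      rw [hde n]
      rw [abs_le]
      constructor
      · have := huniq n
        have := hDχ0 n x
        linarith
      · have := hDψ0 n x
        linarith
    have h1 : gE x ≤ ENNReal.ofReal (mh x) := by
      refine iSup_le fun n => ?_
      rw [← enorm_eq_nnnorm, ← ofReal_norm, Real.norm_eq_abs]
      exact ENNReal.ofReal_le_ofReal (habs n)
    have hfin : gE x ≠ ⊤ := (h1.trans_lt ENNReal.ofReal_lt_top).ne
    have h2 : g x ≤ mh x := by
      rw [hg]
      have := ENNReal.toReal_mono ENNReal.ofReal_ne_top h1
      rwa [ENNReal.toReal_ofReal (hmh0 x)] at this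
    refine ⟨h2, fun n => ?_, hde, fun n => by rw [hde n]; linarith [huniq n]⟩
    have h3 := ENNReal.toReal_mono hfin
      (le_iSup (fun n => ((‖deriv (φ n) x‖₊ : ℝ≥0∞))) n)
    rwa [ENNReal.coe_toReal, coe_nnnorm, Real.norm_eq_abs] at h3
  have hgi : Integrable g volume := by
    refine hmhi.mono' hgm.aestronglyMeasurable ?_
    filter_upwards [hgoodg] with x hx
    rw [Real.norm_eq_abs, abs_of_nonneg (hg0 x)]
    exact hx.1
  -- |φ n t − φ n s| ≤ ∫ s..t g
  have hφg : ∀ n, ∀ s t : ℝ, s ≤ t → |φ n t - φ n s| ≤ ∫ r in s..t, g r := by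
    intro n s t hst
    obtain ⟨hψint, hψle⟩ := mono_deriv_integral_le (hψmono n) hst
    obtain ⟨hχint, hχle⟩ := mono_deriv_integral_le (hχmono n) hst
    have hgii : IntervalIntegrable g volume s t := hgi.intervalIntegrable
    have hmono1 : ∫ r in s..t, (mh r - Dψ n r) ≤ ∫ r in s..t, g r := by
      apply intervalIntegral.integral_mono_ae_restrict hst ((hii s t).sub hψint) hgii
      apply ae_restrict_of_ae
      filter_upwards [hgoodg] with x hx
      rw [← hx.2.2.1 n]
      exact (le_abs_self _).trans (hx.2.1 n)
    have hmono2 : ∫ r in s..t, (mh r - Dχ n r) ≤ ∫ r in s..t, g r := by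
      apply intervalIntegral.integral_mono_ae_restrict hst ((hii s t).sub hχint) hgii
      apply ae_restrict_of_ae
      filter_upwards [hgoodg] with x hx
      rw [hx.2.2.2 n]
      exact (neg_le_abs _).trans (hx.2.1 n)
    rw [intervalIntegral.integral_sub (hii s t) hψint] at hmono1
    rw [intervalIntegral.integral_sub (hii s t) hχint] at hmono2
    have hPst := hPdiff s t
    rw [abs_le]
    constructor
    · -- φ n s − φ n t ≤ ∫ g  (via χ)
      linarith [hχle, hmono2]
    · linarith [hψle, hmono1]
  -- distance bound for the clamped curve
  have hdistg : ∀ s t : ℝ, s ≤ t → dist (ch s) (ch t) ≤ ∫ r in s..t, g r := by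
    intro s t hst
    apply real_le_of_forall_pos_le_add
    intro ε hε
    obtain ⟨δ, hδ0, hδ⟩ := Metric.continuousAt_iff.1 hPcont.continuousAt (ε/4) (by linarith)
    obtain ⟨qq, hq1, hq2⟩ := exists_rat_btwn (show s < s + δ by linarith)
    obtain ⟨n, hen'⟩ : ∃ n : ℕ, (Denumerable.ofNat ℚ n : ℚ) = qq :=
      ⟨@Encodable.encode ℚ Denumerable.toEncodable qq, Denumerable.ofNat_encode qq⟩
    have hen : e n = (qq : ℝ) := by simp only [he]; exact_mod_cast hen'
    have hsq : s ≤ e n := by rw [hen]; exact hq1.le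
    have hqd : dist (e n) s < δ := by
      rw [Real.dist_eq, abs_of_nonneg (by linarith), hen]
      linarith
    have hd1 : dist (ch s) (ch (e n)) ≤ ε/4 := by
      have h1 := hkey s (e n) hsq
      have h2 := hδ hqd
      rw [Real.dist_eq] at h2
      have h3 : P (e n) - P s ≤ |P (e n) - P s| := le_abs_self _
      linarith [h1, h3, h2.le]
    have h4 : φ n t ≤ |φ n t - φ n s| + φ n s := by
      have := le_abs_self (φ n t - φ n s)
      linarith
    have h5 : φ n s = dist (ch s) (ch (e n)) := rfl
    calc dist (ch s) (ch t) ≤ dist (ch s) (ch (e n)) + dist (ch (e n)) (ch t) :=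
          dist_triangle _ _ _
      _ = dist (ch s) (ch (e n)) + φ n t := by rw [hφ]; rw [dist_comm (ch (e n))]
      _ ≤ dist (ch s) (ch (e n)) + (|φ n t - φ n s| + φ n s) := by linarith
      _ ≤ ε/4 + ((∫ r in s..t, g r) + ε/4) := by
          have := hφg n s t hst
          rw [h5] at *
          linarith [hd1]
      _ ≤ (∫ r in s..t, g r) + ε := by linarith
  -- primitive of g
  set Q : ℝ → ℝ := fun u => ∫ r in (0:ℝ)..u, g r with hQdef
  have hgii : ∀ a b : ℝ, IntervalIntegrable g volume a b := fun a b => hgi.intervalIntegrable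
  have hQdiff : ∀ s t : ℝ, Q t - Q s = ∫ r in s..t, g r := fun s t =>
    intervalIntegral.integral_interval_sub_left (hgii 0 t) (hgii 0 s)
  have hQd : ∀ᵐ x, HasDerivAt Q (g x) x := primitive_hasDerivAt hgm hg0 hgi
  have hchQ : ∀ s t : ℝ, dist (ch s) (ch t) ≤ |Q s - Q t| := by
    intro s t
    rcases le_total s t with hst | hst
    · have h1 := hdistg s t hst
      have h2 := hQdiff s t
      have h3 := abs_le.1 (le_refl |Q s - Q t|)
      calc dist (ch s) (ch t) ≤ ∫ r in s..t, g r := h1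
        _ = Q t - Q s := (hQdiff s t).symm
        _ ≤ |Q s - Q t| := by rw [abs_sub_comm]; exact le_abs_self _
    · have h1 := hdistg t s hst
      calc dist (ch s) (ch t) = dist (ch t) (ch s) := dist_comm _ _
        _ ≤ ∫ r in t..s, g r := h1
        _ = Q s - Q t := (hQdiff t s).symm
        _ ≤ |Q s - Q t| := le_abs_self _
  refine ⟨g, hgm, hg0, ?_, hgi.integrableOn, ?_, ?_⟩
  · -- g ≤ |m| a.e. on the restriction
    filter_upwards [ae_restrict_of_ae hgoodg, hmae, ae_restrict_mem measurableSet_Icc]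
      with x hx hmeq hmem
    rw [hmeq]
    refine hx.1.trans ?_
    rw [hmh, Set.indicator_of_mem hmem]
  · -- dist (c 0) (c 1) ≤ ∫_{Icc} g
    have h0 : ch 0 = c 0 := by simp only [hch]; rw [cl_of_mem ⟨le_rfl, h01⟩]
    have h1 : ch 1 = c 1 := by simp only [hch]; rw [cl_of_mem ⟨h01, le_rfl⟩]
    have h2 := hdistg 0 1 h01
    rw [h0, h1] at h2
    rwa [intervalIntegral.integral_of_le h01, ← MeasureTheory.integral_Icc_eq_integral_Ioc] at h2
  · -- the metric derivative exists a.e. and equals g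
    filter_upwards [ae_restrict_of_ae hgood, ae_restrict_of_ae hgoodg,
      ae_restrict_of_ae hQd, ae_restrict_mem measurableSet_Icc] with t hdt hgt hQt htI
    have hcongr : (fun s => dist (c s) (c t) / |s - t|)
        =ᶠ[𝓝[Set.Icc (0:ℝ) 1 \ {t}] t] (fun s => dist (ch s) (ch t) / |s - t|) := by
      filter_upwards [self_mem_nhdsWithin] with s hs
      rw [hch]
      simp only []
      rw [cl_of_mem hs.1, cl_of_mem htI]
    rw [tendsto_congr' hcongr]
    have hsubf : 𝓝[Set.Icc (0:ℝ) 1 \ {t}] t ≤ 𝓝[≠] t :=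
      nhdsWithin_mono t (fun x hx => hx.2)
    refine Tendsto.mono_left ?_ hsubf
    rw [Metric.tendsto_nhds]
    intro ε hε
    have hQslope : Tendsto (fun s => |slope Q t s|) (𝓝[≠] t) (𝓝 (g t)) := by
      have h1 := (hasDerivAt_iff_tendsto_slope.1 hQt).abs
      rwa [abs_of_nonneg (hg0 t)] at h1
    have hup : ∀ᶠ s in 𝓝[≠] t, dist (ch s) (ch t) / |s - t| < g t + ε := by
      have h2 := hQslope.eventually_lt_const (show g t < g t + ε by linarith)
      filter_upwards [h2, self_mem_nhdsWithin] with s hs hsne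
      have hne : s - t ≠ 0 := sub_ne_zero.2 hsne
      have hpos : 0 < |s - t| := abs_pos.2 hne
      refine lt_of_le_of_lt ?_ hs
      rw [slope_def_field, abs_div]
      exact div_le_div_of_nonneg_right (hchQ s t) hpos.le
    have hlow : ∀ᶠ s in 𝓝[≠] t, g t - ε < dist (ch s) (ch t) / |s - t| := by
      rcases lt_or_ge (g t) ε with hc | hc
      · filter_upwards with s
        have h0 : 0 ≤ dist (ch s) (ch t) / |s - t| := div_nonneg dist_nonneg (abs_nonneg _)
        linarith
      · have hclaim : ∃ n, g t - ε/2 < |deriv (φ n) t| := by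
          by_contra hcon
          push_neg at hcon
          have h1 : gE t ≤ ENNReal.ofReal (g t - ε/2) := by
            refine iSup_le fun n => ?_
            rw [← enorm_eq_nnnorm, ← ofReal_norm, Real.norm_eq_abs]
            exact ENNReal.ofReal_le_ofReal (hcon n)
          have h2 := ENNReal.toReal_mono ENNReal.ofReal_ne_top h1
          rw [ENNReal.toReal_ofReal (by linarith)] at h2
          have h3 : g t ≤ g t - ε/2 := h2
          linarith
        obtain ⟨n, hn⟩ := hclaim
        have hder : HasDerivAt (φ n) (deriv (φ n) t) t := by
          have h5 := (hdt n).1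
          rwa [← hgt.2.2.1 n] at h5
        have hφslope : Tendsto (fun s => |slope (φ n) t s|) (𝓝[≠] t) (𝓝 |deriv (φ n) t|) :=
          (hasDerivAt_iff_tendsto_slope.1 hder).abs
        have h4 := hφslope.eventually_const_lt (show g t - ε < |deriv (φ n) t| by linarith)
        filter_upwards [h4, self_mem_nhdsWithin] with s hs hsne
        refine lt_of_lt_of_le hs ?_
        have hne : s - t ≠ 0 := sub_ne_zero.2 hsne
        have hpos : 0 < |s - t| := abs_pos.2 hne
        rw [slope_def_field, abs_div]
        refine div_le_div_of_nonneg_right ?_ hpos.le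
        rw [abs_sub_comm]
        exact hφabs n s t
    filter_upwards [hup, hlow] with s h1 h2
    rw [Real.dist_eq, abs_sub_lt_iff]
    constructor <;> linarith

end AuxB2

section AuxB3

theorem nhds_Icc_sdiff_neBot {t : ℝ} (ht : t ∈ Set.Icc (0:ℝ) 1) :
    (𝓝[Set.Icc (0:ℝ) 1 \ {t}] t).NeBot := by
  rw [← mem_closure_iff_nhdsWithin_neBot]
  rcases lt_or_eq_of_le ht.2 with h | h
  · have hsub : Set.Ioo t 1 ⊆ Set.Icc (0:ℝ) 1 \ {t} := fun x hx =>
      ⟨⟨ht.1.trans hx.1.le, hx.2.le⟩, fun hxx => absurd (Set.mem_singleton_iff.1 hxx) hx.1.ne'⟩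
    refine closure_mono hsub ?_
    rw [closure_Ioo h.ne]
    exact ⟨le_rfl, h.le⟩
  · have hsub : Set.Ioo (0:ℝ) 1 ⊆ Set.Icc (0:ℝ) 1 \ {t} := fun x hx =>
      ⟨⟨hx.1.le, hx.2.le⟩, fun hxx => by
        rw [Set.mem_singleton_iff] at hxx; rw [hxx, ← h] at hx; exact absurd hx.2 (lt_irrefl _)⟩
    refine closure_mono hsub ?_
    rw [closure_Ioo (by norm_num : (0:ℝ) ≠ 1)]
    exact ht

variable {X : Type*} [PseudoMetricSpace X]

theorem core_mder (c : ℝ → X) (m : ℝ → ℝ)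
    (hm : MemLp m 1 (volume.restrict (Set.Icc (0:ℝ) 1)))
    (hdist : ∀ s t : ℝ, 0 ≤ s → s ≤ t → t ≤ 1 → dist (c s) (c t) ≤ ∫ r in s..t, m r) :
    edist (c 0) (c 1) ≤ ∫⁻ t in Set.Icc (0:ℝ) 1, ENNReal.ofReal (mder 0 1 c t) ∧
    ∫⁻ t in Set.Icc (0:ℝ) 1, ENNReal.ofReal (mder 0 1 c t)
      ≤ ∫⁻ t in Set.Icc (0:ℝ) 1, ENNReal.ofReal |m t| := by
  obtain ⟨g, hgm, hg0, hgle, hgint, hgdist, hgtend⟩ := core c m hm hdist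
  have hmder : ∀ᵐ t ∂(volume.restrict (Set.Icc (0:ℝ) 1)), mder 0 1 c t = g t := by
    filter_upwards [hgtend, MeasureTheory.ae_restrict_mem measurableSet_Icc] with t ht htI
    haveI := nhds_Icc_sdiff_neBot htI
    exact ht.limUnder_eq
  have heq : ∫⁻ t in Set.Icc (0:ℝ) 1, ENNReal.ofReal (mder 0 1 c t)
      = ∫⁻ t in Set.Icc (0:ℝ) 1, ENNReal.ofReal (g t) :=
    MeasureTheory.lintegral_congr_ae (hmder.mono fun t ht => congrArg ENNReal.ofReal ht)
  constructor
  · rw [heq]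
    have h1 : ENNReal.ofReal (∫ t in Set.Icc (0:ℝ) 1, g t)
        = ∫⁻ t in Set.Icc (0:ℝ) 1, ENNReal.ofReal (g t) :=
      MeasureTheory.ofReal_integral_eq_lintegral_ofReal hgint
        (Filter.Eventually.of_forall hg0)
    rw [← h1, edist_dist]
    exact ENNReal.ofReal_le_ofReal hgdist
  · rw [heq]
    apply MeasureTheory.lintegral_mono_ae
    filter_upwards [hgle] with t ht
    exact ENNReal.ofReal_le_ofReal ht

theorem edist_le_length (c : ℝ → X) (hc : MemACp 1 0 1 c) :
    edist (c 0) (c 1) ≤ ∫⁻ t in Set.Icc (0:ℝ) 1, ENNReal.ofReal (mder 0 1 c t) := by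
  obtain ⟨m, hm, hd⟩ := hc
  exact (core_mder c m hm hd).1

theorem lip_curve_bound (c : ℝ → X) (K : ℝ) (hK : 0 ≤ K)
    (hlip : ∀ s ∈ Set.Icc (0:ℝ) 1, ∀ t ∈ Set.Icc (0:ℝ) 1, dist (c s) (c t) ≤ K * |s - t|) :
    MemACp 1 0 1 c ∧
      ∫⁻ t in Set.Icc (0:ℝ) 1, ENNReal.ofReal (mder 0 1 c t) ≤ ENNReal.ofReal K := by
  haveI : IsFiniteMeasure (volume.restrict (Set.Icc (0:ℝ) 1)) := ⟨by
    rw [Measure.restrict_apply_univ, Real.volume_Icc]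
    exact ENNReal.ofReal_lt_top⟩
  have hmem : MemLp (fun _ => K) 1 (volume.restrict (Set.Icc (0:ℝ) 1)) := memLp_const K
  have hd : ∀ s t : ℝ, 0 ≤ s → s ≤ t → t ≤ 1 → dist (c s) (c t) ≤ ∫ _ in s..t, K := by
    intro s t h0 hst h1
    rw [intervalIntegral.integral_const, smul_eq_mul]
    calc dist (c s) (c t) ≤ K * |s - t| :=
          hlip s ⟨h0, hst.trans h1⟩ t ⟨h0.trans hst, h1⟩
      _ = (t - s) * K := by rw [abs_sub_comm, abs_of_nonneg (by linarith)]; ring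
  refine ⟨⟨fun _ => K, hmem, hd⟩, ?_⟩
  refine (core_mder c (fun _ => K) hmem hd).2.trans ?_
  rw [MeasureTheory.setLIntegral_const, Real.volume_Icc, abs_of_nonneg hK]
  rw [show (1:ℝ) - 0 = 1 by norm_num, ENNReal.ofReal_one, mul_one]

end AuxB3

/-- If `N` is a complete separable length space (in the quantitative sense that any two
points `y, y'` are joined, for every `κ > 1`, by a Lipschitz curve on `[0,1]` with Lipschitz
constant at most `κ · d(y,y')`), then for any `p ∈ [1,∞]` the nonlinear Lebesgue space
`(L^p_h(M,N), D_p)` enjoys the same quantitative property; consequently it is a length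
space: its metric coincides with the induced intrinsic metric, i.e. the infimum of the
lengths `∫_0^1 |c'|(t) dt` of absolutely continuous connecting curves. -/
theorem stmt15 {α : Type*} [MeasurableSpace α] {N : Type*} [MetricSpace N]
    [MeasurableSpace N] [BorelSpace N] [CompleteSpace N]
    [TopologicalSpace.SeparableSpace N]
    (μ : Measure α) (h : α → N) (hh : SM h) (p : ℝ≥0∞) [Fact (1 ≤ p)]
    (hlen : ∀ y y' : N, ∀ κ : ℝ, 1 < κ → ∃ γ : ℝ → N, γ 0 = y ∧ γ 1 = y' ∧
      LipschitzOnWith (Real.toNNReal (κ * dist y y')) γ (Set.Icc (0:ℝ) 1)) :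
    (∀ F F' : NLp μ h hh p, ∀ κ : ℝ, 1 < κ →
      ∃ c : ℝ → NLp μ h hh p, c 0 = F ∧ c 1 = F' ∧
        ∀ s ∈ Set.Icc (0:ℝ) 1, ∀ t ∈ Set.Icc (0:ℝ) 1,
          dist (c s) (c t) ≤ κ * |s - t| * dist F F') ∧
    (∀ F F' : NLp μ h hh p,
      edist F F'
        = ⨅ (c : ℝ → NLp μ h hh p) (_ : MemACp 1 0 1 c) (_ : c 0 = F) (_ : c 1 = F'),
            ∫⁻ t in Set.Icc (0:ℝ) 1, ENNReal.ofReal (mder 0 1 c t)) := by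
  have hp : 1 ≤ p := Fact.out
  constructor
  · intro F F' κ hκ
    exact partA hlen F F' hκ
  · intro F F'
    apply le_antisymm
    · refine le_iInf fun c => le_iInf fun hc => le_iInf fun hc0 => le_iInf fun hc1 => ?_
      rw [← hc0, ← hc1]
      exact edist_le_length c hc
    · have hFd : edist F F' ≠ ⊤ := NLp.dp_ne_top hp F F'
      set d := dist F F' with hd
      have hd0 : 0 ≤ d := dist_nonneg
      have hstep : ∀ κ : ℝ, 1 < κ →
          (⨅ (c : ℝ → NLp μ h hh p) (_ : MemACp 1 0 1 c) (_ : c 0 = F) (_ : c 1 = F'),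
            ∫⁻ t in Set.Icc (0:ℝ) 1, ENNReal.ofReal (mder 0 1 c t))
          ≤ ENNReal.ofReal (κ * d) := by
        intro κ hκ
        obtain ⟨c, hc0, hc1, hlip⟩ := partA hlen F F' hκ
        have hK : 0 ≤ κ * d := mul_nonneg (by linarith) hd0
        have hlip' : ∀ s ∈ Set.Icc (0:ℝ) 1, ∀ t ∈ Set.Icc (0:ℝ) 1,
            dist (c s) (c t) ≤ (κ * d) * |s - t| := by
          intro s hs t ht
          calc dist (c s) (c t) ≤ κ * |s - t| * d := hlip s hs t ht
            _ = (κ * d) * |s - t| := by ring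
        obtain ⟨hmem, hbound⟩ := lip_curve_bound c (κ * d) hK hlip'
        refine le_trans ?_ hbound
        exact iInf_le_of_le c (iInf_le_of_le hmem (iInf_le_of_le hc0 (iInf_le_of_le hc1 le_rfl)))
      have hedist : edist F F' = ENNReal.ofReal d := edist_dist F F'
      refine ENNReal.le_of_forall_pos_le_add fun ε hε _ => ?_
      have hdd : (0:ℝ) < d + 1 := by linarith
      set κ : ℝ := 1 + (ε : ℝ) / (2 * (d + 1)) with hκdef
      have hκ : 1 < κ := by
        rw [hκdef]
        have : (0:ℝ) < (ε : ℝ) / (2 * (d + 1)) := by positivity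
        linarith
      refine (hstep κ hκ).trans ?_
      have h1 : κ * d ≤ d + (ε : ℝ) / 2 := by
        rw [hκdef]
        have h2 : (ε : ℝ) / (2 * (d + 1)) * d ≤ (ε : ℝ) / 2 := by
          rw [div_mul_eq_mul_div, div_le_div_iff₀ (by positivity) (by norm_num)]
          have : (ε:ℝ) * d * 2 ≤ ε * (d+1) * 2 := by nlinarith [ε.coe_nonneg]
          calc (ε:ℝ) * d * 2 ≤ (ε:ℝ) * (d + 1) * 2 := by nlinarith [ε.coe_nonneg]
            _ = (ε:ℝ) * (2 * (d+1)) := by ring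
        nlinarith
      calc ENNReal.ofReal (κ * d) ≤ ENNReal.ofReal (d + (ε:ℝ)/2) :=
            ENNReal.ofReal_le_ofReal h1
        _ ≤ ENNReal.ofReal d + ENNReal.ofReal ((ε:ℝ)/2) := ENNReal.ofReal_add_le
        _ ≤ edist F F' + (ε : ℝ≥0∞) := by
            rw [hedist]
            refine add_le_add le_rfl ?_
            calc ENNReal.ofReal ((ε:ℝ)/2) ≤ ENNReal.ofReal (ε:ℝ) :=
                  ENNReal.ofReal_le_ofReal (by linarith [ε.coe_nonneg, NNReal.coe_pos.2 hε])
              _ = (ε : ℝ≥0∞) := ENNReal.ofReal_coe_nnreal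

end NLS
end
end

section
/- Let (M, Σ_M, μ_M) be a measure space whose measure is not purely infinite (there exists a measurable set A with 0 < μ_M(A) < ∞), let (N, d_N) be a complete metric space, h : M → N strongly measurable, and p ∈ (1,∞). If (L^p_h(M,N), D_p) is a geodesic space — every pair F, F' ∈ L^p_h(M,N) is joined by a curve c : [0,1] → L^p_h(M,N) with c(0) = F, c(1) = F', and D_p(c(s), c(t)) = |s−t| · D_p(F,F') for all s, t — then N is a geodesic space: every pair y, y' ∈ N is joined by a curve γ : [0,1] → N with γ(0) = y, γ(1) = y', and d_N(γ(s), γ(t)) = |s−t| · d_N(y,y') for all s, t ∈ [0,1]. -/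
/-!
Let `B` be a set of finite positive measure on which `h` is bounded, and let `F`, `F'` be `h`
changed to the constants `y`, `y'` on `B`. Take a constant-speed geodesic `c` from `F` to `F'`.
Since `p > 1`, strict convexity of `x ↦ x ^ p` turns the triangle inequality
`d(F, c t) + d(c t, F') ≥ d(F, F')`, whose `L^p` norms add up exactly, into the a.e. equality
`d(F x, c t x) = t d(F x, F' x)`; with the reverse triangle inequality and equality of `L^p`
norms this gives `d(c s x, c t x) = |s - t| d(F x, F' x)` a.e., for each pair of times. For a
point `x₀ ∈ B` outside the countably many exceptional null sets of rational times,
`q ↦ c q x₀` is a constant-speed curve from `y` to `y'` on the rationals, which extends to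
`[0, 1]` since `N` is complete.
-/

set_option linter.unusedSectionVars false

open MeasureTheory ENNReal Set Filter Topology TopologicalSpace

noncomputable section

-- Reopened without the section variables above, which would add `[BorelSpace N]` everywhere.
namespace NLS

section StrictConvexity

variable {p l : ℝ}

private lemma mul_div_rpow_eq (hl : 0 < l) {a : ℝ} (ha : 0 ≤ a) :
    l * (a / l) ^ p = l ^ (1 - p) * a ^ p := by
  rw [Real.div_rpow ha hl.le, Real.rpow_sub hl, Real.rpow_one]
  ring

theorem rpow_add_le_weighted (hp : 1 ≤ p) (hl : 0 < l) (hl1 : l < 1) {a b : ℝ}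
    (ha : 0 ≤ a) (hb : 0 ≤ b) :
    (a + b) ^ p ≤ l ^ (1 - p) * a ^ p + (1 - l) ^ (1 - p) * b ^ p := by
  have hl' : 0 < 1 - l := sub_pos.2 hl1
  have hconv := (convexOn_rpow hp).2 (div_nonneg ha hl.le) (div_nonneg hb hl'.le)
    hl.le hl'.le (add_sub_cancel l 1)
  simp only [smul_eq_mul, mul_div_cancel₀ _ hl.ne', mul_div_cancel₀ _ hl'.ne'] at hconv
  rwa [mul_div_rpow_eq hl ha, mul_div_rpow_eq hl' hb] at hconv

theorem eq_mul_of_rpow_eq_weighted (hp : 1 < p) (hl : 0 < l) (hl1 : l < 1) {a b w : ℝ}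
    (ha : 0 ≤ a) (hb : 0 ≤ b) (hw : 0 ≤ w) (hwab : w ≤ a + b)
    (heq : w ^ p = l ^ (1 - p) * a ^ p + (1 - l) ^ (1 - p) * b ^ p) :
    a = l * w := by
  have hl' : 0 < 1 - l := sub_pos.2 hl1
  rw [← mul_div_rpow_eq hl ha, ← mul_div_rpow_eq hl' hb] at heq
  have hw_le : w ^ p ≤ (l * (a / l) + (1 - l) * (b / (1 - l))) ^ p := by
    rw [mul_div_cancel₀ _ hl.ne', mul_div_cancel₀ _ hl'.ne']
    exact Real.rpow_le_rpow hw hwab (by linarith)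
  have hab : a / l = b / (1 - l) := by
    by_contra hne
    have hstrict := (strictConvexOn_rpow hp).2 (div_nonneg ha hl.le) (div_nonneg hb hl'.le)
      hne hl hl' (add_sub_cancel l 1)
    simp only [smul_eq_mul] at hstrict
    linarith
  rw [← hab, ← add_mul, add_sub_cancel, one_mul] at heq
  have hwa : w = a / l := Real.rpow_left_injOn (by linarith) hw (div_nonneg ha hl.le) heq
  rw [hwa, mul_div_cancel₀ _ hl.ne']

end StrictConvexity

section Integrals

variable {α : Type*} [MeasurableSpace α] {μ : Measure α} {p : ℝ}

theorem ae_eq_of_ae_le_of_integral_rpow_eq (hp : 0 < p) {f g : α → ℝ} (hf : 0 ≤ᵐ[μ] f)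
    (hfg : f ≤ᵐ[μ] g) (hfi : Integrable (fun x => f x ^ p) μ)
    (hgi : Integrable (fun x => g x ^ p) μ) (heq : ∫ x, f x ^ p ∂μ = ∫ x, g x ^ p ∂μ) :
    f =ᵐ[μ] g := by
  have hpow : (fun x => f x ^ p) =ᵐ[μ] fun x => g x ^ p := by
    refine (integral_eq_iff_of_ae_le hfi hgi ?_).1 heq
    filter_upwards [hf, hfg] with x hfx hfgx
    exact Real.rpow_le_rpow hfx hfgx hp.le
  filter_upwards [hf, hfg, hpow] with x hfx hfgx hx
  exact Real.rpow_left_injOn hp.ne' hfx (hfx.trans hfgx) hx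

-- The equality case of Minkowski's inequality.
theorem ae_eq_mul_of_le_add_of_integral_rpow_eq (hp : 1 < p) {l : ℝ} (hl : 0 < l)
    (hl1 : l < 1) {u v w : α → ℝ} (hu : ∀ x, 0 ≤ u x) (hv : ∀ x, 0 ≤ v x) (hw : ∀ x, 0 ≤ w x)
    (hwuv : ∀ x, w x ≤ u x + v x) (hui : Integrable (fun x => u x ^ p) μ)
    (hvi : Integrable (fun x => v x ^ p) μ) (hwi : Integrable (fun x => w x ^ p) μ)
    (hu_int : ∫ x, u x ^ p ∂μ = l ^ p * ∫ x, w x ^ p ∂μ)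
    (hv_int : ∫ x, v x ^ p ∂μ = (1 - l) ^ p * ∫ x, w x ^ p ∂μ) :
    ∀ᵐ x ∂μ, u x = l * w x := by
  have hl' : 0 < 1 - l := sub_pos.2 hl1
  set g : α → ℝ := fun x => l ^ (1 - p) * u x ^ p + (1 - l) ^ (1 - p) * v x ^ p
  have hgi : Integrable g μ := (hui.const_mul _).add (hvi.const_mul _)
  have hwg : ∀ x, w x ^ p ≤ g x := fun x =>
    (Real.rpow_le_rpow (hw x) (hwuv x) (by linarith)).trans
      (rpow_add_le_weighted hp.le hl hl1 (hu x) (hv x))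
  have hcancel : ∀ {t : ℝ}, 0 < t → t ^ (1 - p) * t ^ p = t := fun ht => by
    rw [← Real.rpow_add ht, sub_add_cancel, Real.rpow_one]
  have hg_int : ∫ x, w x ^ p ∂μ = ∫ x, g x ∂μ := by
    rw [integral_add (hui.const_mul _) (hvi.const_mul _), integral_const_mul, integral_const_mul,
      hu_int, hv_int, ← mul_assoc, ← mul_assoc, hcancel hl, hcancel hl', ← add_mul, add_sub_cancel,
      one_mul]
  filter_upwards [(integral_eq_iff_of_ae_le hwi hgi (.of_forall hwg)).1 hg_int] with x hx
  exact eq_mul_of_rpow_eq_weighted hp hl hl1 (hu x) (hv x) (hw x) (hwuv x) hx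

end Integrals

theorem exists_subset_measure_ne_zero_isBounded_image {α Y : Type*} [MeasurableSpace α]
    [PseudoMetricSpace Y] [MeasurableSpace Y] [OpensMeasurableSpace Y] {μ : Measure α}
    {A : Set α} {f : α → Y} (hA : MeasurableSet A) (hμA : μ A ≠ 0) (hf : Measurable f) :
    ∃ B ⊆ A, MeasurableSet B ∧ μ B ≠ 0 ∧ Bornology.IsBounded (f '' B) := by
  obtain ⟨x, -⟩ := nonempty_of_measure_ne_zero hμA
  obtain ⟨n, hn⟩ := exists_measure_pos_of_not_measure_iUnion_null
    (s := fun n : ℕ => A ∩ f ⁻¹' Metric.closedBall (f x) n) (by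
      rwa [← inter_iUnion, ← preimage_iUnion, Metric.iUnion_closedBall_nat, preimage_univ,
        inter_univ])
  exact ⟨_, inter_subset_left, hA.inter (hf Metric.isClosed_closedBall.measurableSet), hn.ne',
    Metric.isBounded_closedBall.subset (image_subset_iff.2 inter_subset_right)⟩

theorem exists_extend_rat_of_dist_eq {X : Type*} [MetricSpace X] [CompleteSpace X]
    {f : ℚ → X} (hf : UniformContinuous f) {d : ℝ → ℝ → ℝ} (hd : Continuous (Function.uncurry d))
    (hfd : ∀ q q' : ℚ, dist (f q) (f q') = d q q') :
    ∃ γ : ℝ → X, (∀ q : ℚ, γ q = f q) ∧ ∀ s t, dist (γ s) (γ t) = d s t := by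
  have he := Rat.isUniformEmbedding_coe_real.isUniformInducing
  set γ := (he.isDenseInducing Rat.denseRange_cast).extend f
  have hγq : ∀ q : ℚ, γ q = f q := uniformly_extend_of_ind he Rat.denseRange_cast hf
  have hγ : Continuous γ :=
    (uniformContinuous_uniformly_extend he Rat.denseRange_cast hf).continuous
  refine ⟨γ, hγq, fun s t => ?_⟩
  refine Rat.denseRange_cast.induction_on₂ (p := fun s t => dist (γ s) (γ t) = d s t) ?_ ?_ s t
  · exact isClosed_eq (by fun_prop) hd
  · intro q q'
    simp only [hγq, hfd]

theorem exists_geodesic_of_dist_eq_rat {X : Type*} [MetricSpace X] [CompleteSpace X]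
    {c : ℝ → X} {D : ℝ}
    (hc : ∀ q q' : ℚ,
      dist (c (projIcc (0:ℝ) 1 zero_le_one q)) (c (projIcc (0:ℝ) 1 zero_le_one q')) =
        |(projIcc (0:ℝ) 1 zero_le_one q : ℝ) - projIcc (0:ℝ) 1 zero_le_one q'| * D) :
    ∃ γ : ℝ → X, γ 0 = c 0 ∧ γ 1 = c 1 ∧
      ∀ s ∈ Icc (0:ℝ) 1, ∀ t ∈ Icc (0:ℝ) 1, dist (γ s) (γ t) = |s - t| * D := by
  have hD : 0 ≤ D := by simpa using (hc 0 1).symm.trans_ge dist_nonneg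
  -- clamping to `[0, 1]` makes the curve Lipschitz on all of `ℚ`
  have hlip : LipschitzWith (Real.toNNReal D) fun q : ℚ => c (projIcc (0:ℝ) 1 zero_le_one q) :=
    .of_dist_le_mul fun q q' => by
      rw [hc, Real.coe_toNNReal D hD, Rat.dist_eq, mul_comm]
      exact mul_le_mul_of_nonneg_left (abs_projIcc_sub_projIcc _) hD
  obtain ⟨γ, hγq, hγ⟩ := exists_extend_rat_of_dist_eq hlip.uniformContinuous
    (d := fun s t => |(projIcc (0:ℝ) 1 zero_le_one s : ℝ) - projIcc (0:ℝ) 1 zero_le_one t| * D)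
    (by fun_prop) hc
  refine ⟨γ, by simpa using hγq 0, by simpa using hγq 1, fun s hs t ht => ?_⟩
  rw [hγ, projIcc_of_mem _ hs, projIcc_of_mem _ ht]

variable {α : Type*} [MeasurableSpace α] {N : Type*} [MetricSpace N]

theorem Dp_piecewise_const_ne_top {μ : Measure α} {p : ℝ≥0∞} {f : α → N} {A : Set α}
    [DecidablePred (· ∈ A)] (hA : MeasurableSet A) (hμA : μ A ≠ ∞)
    (hbdd : Bornology.IsBounded (f '' A)) (z : N) :
    Dp μ p (A.piecewise (fun _ => z) f) f ≠ ∞ := by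
  obtain ⟨C, hC⟩ := hbdd.subset_closedBall z
  have hle : Dp μ p (A.piecewise (fun _ => z) f) f ≤ eLpNorm (A.indicator fun _ => C) p μ := by
    refine eLpNorm_mono_real fun x => ?_
    by_cases hx : x ∈ A
    · simpa [hx, dist_comm z] using hC ⟨x, hx, rfl⟩
    · simp [hx]
  exact ne_top_of_le_ne_top (memLp_indicator_const p hA C (Or.inr hμA)).eLpNorm_ne_top hle

theorem SM.piecewise_const [MeasurableSpace N] {f : α → N} (hf : SM f) {A : Set α}
    [DecidablePred (· ∈ A)] (hA : MeasurableSet A) (z : N) :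
    SM (A.piecewise (fun _ => z) f) := by
  refine ⟨measurable_const.piecewise hA hf.1, ?_⟩
  have hrange : range (A.piecewise (fun _ => z) f) ⊆ {z} ∪ range f := by
    rintro _ ⟨x, rfl⟩
    by_cases hx : x ∈ A <;> simp [hx]
  exact ((countable_singleton z).isSeparable.union hf.2).mono hrange

namespace NLp

variable [MeasurableSpace N] [BorelSpace N] {μ : Measure α} {h : α → N} {hh : SM h}

def piecewiseConst {p : ℝ≥0∞} {B : Set α} [DecidablePred (· ∈ B)] (hB : MeasurableSet B)
    (hμB : μ B ≠ ∞) (hbdd : Bornology.IsBounded (h '' B)) (z : N) : NLp μ h hh p :=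
  ⟨B.piecewise (fun _ => z) h, hh.piecewise_const hB z, Dp_piecewise_const_ne_top hB hμB hbdd z⟩

theorem piecewiseConst_apply_of_mem {p : ℝ≥0∞} {B : Set α} [DecidablePred (· ∈ B)]
    {hB : MeasurableSet B} {hμB : μ B ≠ ∞} {hbdd : Bornology.IsBounded (h '' B)} {z : N} {x : α}
    (hx : x ∈ B) : (piecewiseConst (p := p) (hh := hh) hB hμB hbdd z).1 x = z :=
  if_pos hx

theorem memLp_dist {p : ℝ≥0∞} [Fact (1 ≤ p)] (f g : NLp μ h hh p) :
    MemLp (fun x => dist (f.1 x) (g.1 x)) p μ :=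
  ⟨(f.2.1.aesm μ).dist (g.2.1.aesm μ), (dp_ne_top Fact.out f g).lt_top⟩

variable {p : ℝ} [Fact (1 ≤ ENNReal.ofReal p)]

theorem integrable_dist_rpow (f g : NLp μ h hh (ENNReal.ofReal p)) :
    Integrable (fun x => dist (f.1 x) (g.1 x) ^ p) μ := by
  have hp : 0 < p := one_pos.trans_le (ENNReal.one_le_ofReal.1 Fact.out)
  simpa [ENNReal.toReal_ofReal hp.le, abs_dist] using
    (memLp_dist f g).integrable_norm_rpow (ENNReal.ofReal_pos.2 hp).ne' ENNReal.ofReal_ne_top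

theorem integral_dist_rpow (f g : NLp μ h hh (ENNReal.ofReal p)) :
    ∫ x, dist (f.1 x) (g.1 x) ^ p ∂μ = dist f g ^ p := by
  have hp : 0 < p := one_pos.trans_le (ENNReal.one_le_ofReal.1 Fact.out)
  have hint : 0 ≤ ∫ x, dist (f.1 x) (g.1 x) ^ p ∂μ :=
    integral_nonneg fun x => Real.rpow_nonneg dist_nonneg _
  have hnorm := (memLp_dist f g).eLpNorm_eq_integral_rpow_norm (ENNReal.ofReal_pos.2 hp).ne'
    ENNReal.ofReal_ne_top
  simp only [ENNReal.toReal_ofReal hp.le, Real.norm_eq_abs, abs_dist] at hnorm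
  rw [dist_def, show Dp μ _ f.1 g.1 = _ from hnorm, ENNReal.toReal_ofReal (by positivity),
    ← Real.rpow_mul hint, inv_mul_cancel₀ hp.ne', Real.rpow_one]

theorem ae_dist_eq_mul_of_dist_eq (hp : 1 < p) {f g k : NLp μ h hh (ENNReal.ofReal p)} {l : ℝ}
    (hl : 0 < l) (hl1 : l < 1) (hfg : dist f g = l * dist f k)
    (hgk : dist g k = (1 - l) * dist f k) :
    ∀ᵐ x ∂μ, dist (f.1 x) (g.1 x) = l * dist (f.1 x) (k.1 x) :=
  ae_eq_mul_of_le_add_of_integral_rpow_eq hp hl hl1 (fun _ => dist_nonneg)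
    (fun _ => dist_nonneg) (fun _ => dist_nonneg) (fun _ => dist_triangle _ _ _)
    (integrable_dist_rpow f g) (integrable_dist_rpow g k) (integrable_dist_rpow f k)
    (by rw [integral_dist_rpow, integral_dist_rpow, hfg, Real.mul_rpow hl.le dist_nonneg])
    (by rw [integral_dist_rpow, integral_dist_rpow, hgk,
      Real.mul_rpow (sub_pos.2 hl1).le dist_nonneg])

theorem ae_dist_eq_of_geodesic (hp : 1 < p) {c : ℝ → NLp μ h hh (ENNReal.ofReal p)}
    (hc : ∀ s ∈ Icc (0:ℝ) 1, ∀ t ∈ Icc (0:ℝ) 1, dist (c s) (c t) = |s - t| * dist (c 0) (c 1))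
    {s t : ℝ} (hs : s ∈ Icc (0:ℝ) 1) (ht : t ∈ Icc (0:ℝ) 1) :
    ∀ᵐ x ∂μ, dist ((c s).1 x) ((c t).1 x) = |s - t| * dist ((c 0).1 x) ((c 1).1 x) := by
  have h01 : (0:ℝ) ∈ Icc (0:ℝ) 1 := left_mem_Icc.2 zero_le_one
  have h11 : (1:ℝ) ∈ Icc (0:ℝ) 1 := right_mem_Icc.2 zero_le_one
  have hfrom0 : ∀ r ∈ Icc (0:ℝ) 1,
      ∀ᵐ x ∂μ, dist ((c 0).1 x) ((c r).1 x) = r * dist ((c 0).1 x) ((c 1).1 x) := by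
    intro r hr
    rcases hr.1.eq_or_lt with rfl | hr0
    · simp
    rcases hr.2.eq_or_lt with rfl | hr1
    · simp
    refine ae_dist_eq_mul_of_dist_eq hp hr0 hr1 ?_ ?_
    · rw [hc 0 h01 r hr, zero_sub, abs_neg, abs_of_pos hr0]
    · rw [hc r hr 1 h11, abs_sub_comm, abs_of_pos (sub_pos.2 hr1)]
  -- the reverse triangle inequality through `c 0` gives `≥`; the `L^p` norms agree
  have hlower : ∀ᵐ x ∂μ,
      |s - t| * dist ((c 0).1 x) ((c 1).1 x) ≤ dist ((c s).1 x) ((c t).1 x) := by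
    filter_upwards [hfrom0 s hs, hfrom0 t ht] with x hxs hxt
    calc |s - t| * dist ((c 0).1 x) ((c 1).1 x)
        = |dist ((c 0).1 x) ((c s).1 x) - dist ((c 0).1 x) ((c t).1 x)| := by
          rw [hxs, hxt, ← sub_mul, abs_mul, abs_dist]
      _ ≤ dist ((c s).1 x) ((c t).1 x) := by
          rw [dist_comm ((c 0).1 x), dist_comm ((c 0).1 x)]
          exact abs_dist_sub_le _ _ _
  have hp0 : 0 < p := one_pos.trans hp
  have hae := ae_eq_of_ae_le_of_integral_rpow_eq hp0 (.of_forall fun x => by positivity) hlower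
    ?_ (integrable_dist_rpow (c s) (c t)) ?_
  · filter_upwards [hae] with x hx using hx.symm
  · simpa only [Real.mul_rpow (abs_nonneg _) dist_nonneg] using
      (integrable_dist_rpow (c 0) (c 1)).const_mul (|s - t| ^ p)
  · simp only [Real.mul_rpow (abs_nonneg _) dist_nonneg]
    rw [integral_const_mul, integral_dist_rpow, integral_dist_rpow, hc s hs t ht,
      Real.mul_rpow (abs_nonneg _) dist_nonneg]

theorem exists_mem_forall_rat_dist_eq (hp : 1 < p) {c : ℝ → NLp μ h hh (ENNReal.ofReal p)}
    (hc : ∀ s ∈ Icc (0:ℝ) 1, ∀ t ∈ Icc (0:ℝ) 1, dist (c s) (c t) = |s - t| * dist (c 0) (c 1))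
    {B : Set α} (hB : MeasurableSet B) (hμB : μ B ≠ 0) :
    ∃ x ∈ B, ∀ q q' : ℚ,
      dist ((c (projIcc (0:ℝ) 1 zero_le_one q)).1 x) ((c (projIcc (0:ℝ) 1 zero_le_one q')).1 x) =
        |(projIcc (0:ℝ) 1 zero_le_one q : ℝ) - projIcc (0:ℝ) 1 zero_le_one q'| *
          dist ((c 0).1 x) ((c 1).1 x) := by
  have hae := ae_all_iff.2 fun q : ℚ => ae_all_iff.2 fun q' : ℚ =>
    ae_dist_eq_of_geodesic (μ := μ) hp hc (projIcc (0:ℝ) 1 zero_le_one q).2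
      (projIcc (0:ℝ) 1 zero_le_one q').2
  have : (ae (μ.restrict B)).NeBot := ae_neBot.2 (by simpa using hμB)
  exact ((ae_restrict_mem hB).and (ae_restrict_of_ae hae)).exists

end NLp

/-- If the measure `μ` is not purely infinite (some measurable set has finite positive
measure), `N` is complete and `1 < p < ∞`, and the nonlinear Lebesgue space
`(L^p_h(M,N), D_p)` is a geodesic space, then `N` itself is a geodesic space. -/
theorem stmt16 {α : Type*} [MeasurableSpace α] {N : Type*} [MetricSpace N]
    [MeasurableSpace N] [BorelSpace N] [CompleteSpace N]
    (μ : Measure α) (hμ : ∃ A : Set α, MeasurableSet A ∧ 0 < μ A ∧ μ A < ∞)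
    (h : α → N) (hh : SM h)
    (p : ℝ) (hp : 1 < p) [Fact (1 ≤ ENNReal.ofReal p)]
    (hgeo : ∀ F F' : NLp μ h hh (ENNReal.ofReal p),
      ∃ c : ℝ → NLp μ h hh (ENNReal.ofReal p), c 0 = F ∧ c 1 = F' ∧
        ∀ s ∈ Set.Icc (0:ℝ) 1, ∀ t ∈ Set.Icc (0:ℝ) 1,
          dist (c s) (c t) = |s - t| * dist F F') :
    ∀ y y' : N, ∃ γ : ℝ → N, γ 0 = y ∧ γ 1 = y' ∧
      ∀ s ∈ Set.Icc (0:ℝ) 1, ∀ t ∈ Set.Icc (0:ℝ) 1,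
        dist (γ s) (γ t) = |s - t| * dist y y' := by
  classical
  intro y y'
  obtain ⟨A, hA, hμA, hμA_fin⟩ := hμ
  obtain ⟨B, hBA, hB, hμB, hbdd⟩ := exists_subset_measure_ne_zero_isBounded_image hA hμA.ne' hh.1
  have hμB_fin : μ B ≠ ∞ := ((measure_mono hBA).trans_lt hμA_fin).ne
  obtain ⟨c, hc0, hc1, hc⟩ :=
    hgeo (NLp.piecewiseConst hB hμB_fin hbdd y) (NLp.piecewiseConst hB hμB_fin hbdd y')
  rw [← hc0, ← hc1] at hc
  obtain ⟨x₀, hx₀B, hx₀⟩ := NLp.exists_mem_forall_rat_dist_eq hp hc hB hμB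
  obtain ⟨γ, hγ0, hγ1, hγ⟩ := exists_geodesic_of_dist_eq_rat (c := fun s => (c s).1 x₀) hx₀
  have hy : (c 0).1 x₀ = y := hc0 ▸ NLp.piecewiseConst_apply_of_mem hx₀B
  have hy' : (c 1).1 x₀ = y' := hc1 ▸ NLp.piecewiseConst_apply_of_mem hx₀B
  simp only [hy, hy'] at hγ0 hγ1 hγ
  exact ⟨γ, hγ0, hγ1, hγ⟩

end NLS
end
end
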